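/- arXiv:1909.05694 — 8 statements merged into one kernel-verified Lean document; each statement's English description precedes it below -/
import Mathlib

section
/- For a word w of length n and k ≤ n, the union B of the set of length-(log n) substrings of w together with the set of length-(log n) periodic extensions Cr_{log n}(w_{[-i]}) for 1 ≤ i ≤ log(n)-1 has size at most |w|; consequently, if |w| < n = 2^{log n}, then there exists a binary word u of length log n not in B. -/
/-- The set `B`: all length-`L` substrings of the length-`m` word `w` together with the
length-`L` periodic extensions of the length-`i` suffixes of `w`, for `1 ≤ i ≤ L - 1`. -/
def windowsB (L m : ℕ) (w : ℕ → Bool) : Finset (Fin L → Bool) :=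
  ((Finset.range (m - L + 1)).image (fun j => fun t : Fin L => w (j + (t : ℕ)))) ∪
    ((Finset.Icc 1 (L - 1)).image (fun i => fun t : Fin L => w (m - i + (t : ℕ) % i)))

/-- `B` has size at most `m = |w|`; consequently if `m < n = 2^L` there is a binary word of
length `L` not belonging to `B`. -/
theorem stmt_3 (L n m : ℕ) (hL : 1 ≤ L) (hn : n = 2 ^ L) (hm : L ≤ m) (w : ℕ → Bool) :
    (windowsB L m w).card ≤ m ∧ (m < n → ∃ u : Fin L → Bool, u ∉ windowsB L m w) := by
  have hcard : (windowsB L m w).card ≤ m := by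
    have h1 := Finset.card_union_le
      ((Finset.range (m - L + 1)).image (fun j => fun t : Fin L => w (j + (t : ℕ))))
      ((Finset.Icc 1 (L - 1)).image (fun i => fun t : Fin L => w (m - i + (t : ℕ) % i)))
    have h2 := Finset.card_image_le (s := Finset.range (m - L + 1))
      (f := fun j => fun t : Fin L => w (j + (t : ℕ)))
    have h3 := Finset.card_image_le (s := Finset.Icc 1 (L - 1))
      (f := fun i => fun t : Fin L => w (m - i + (t : ℕ) % i))
    simp only [Finset.card_range, Nat.card_Icc] at h2 h3
    calc (windowsB L m w).card ≤ _ := h1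
      _ ≤ (m - L + 1) + (L - 1 + 1 - 1) := Nat.add_le_add h2 h3
      _ ≤ m := by omega
  refine ⟨hcard, fun hmn => ?_⟩
  by_contra h
  push_neg at h
  have hall : (Finset.univ : Finset (Fin L → Bool)) ⊆ windowsB L m w := fun u _ => h u
  have := Finset.card_le_card hall
  simp [Finset.card_univ] at this
  omega
end

section
/- For binary sequences of length n chosen uniformly at random, and k = ⌊a log₂ n⌋ with a > 1, the probability that the sequence is k-repeat free is at least (1 - 1/(4nk))^{n²} for all sufficiently large n. -/
/-- Extension of a word `w : Fin m → Bool` to all of `ℕ` (by `false`). -/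
def extB (m : ℕ) (w : Fin m → Bool) : ℕ → Bool :=
  fun i => if h : i < m then w ⟨i, h⟩ else false

namespace RF6

open Finset

attribute [local instance] Classical.propDecidable

variable (n k : ℕ)

abbrev Word := Fin (n + k) → Bool

def Bad (p : ℕ × ℕ) (w : Word n k) : Prop :=
  ∀ t < k, extB (n + k) w (p.1 + t) = extB (n + k) w (p.2 + t)

def Good (S : Finset (ℕ × ℕ)) (w : Word n k) : Prop :=
  ∀ p ∈ S, ¬ Bad n k p w

noncomputable def Ncount (S : Finset (ℕ × ℕ)) : ℕ :=
  (Finset.univ.filter (fun w : Word n k => Good n k S w)).card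

def Pairs : Finset (ℕ × ℕ) := (Finset.range n ×ˢ Finset.range n).filter (fun p => p.1 < p.2)

def Avoids (j : ℕ) (q : ℕ × ℕ) : Prop :=
  ∀ t < k, ¬ (j ≤ q.1 + t ∧ q.1 + t < j + k) ∧ ¬ (j ≤ q.2 + t ∧ q.2 + t < j + k)

lemma extB_lt {m : ℕ} (w : Fin m → Bool) {i : ℕ} (h : i < m) : extB m w i = w ⟨i, h⟩ :=
  dif_pos h

noncomputable def repair (i j : ℕ) (w : Word n k) : Word n k :=
  fun s => if j ≤ (s : ℕ) ∧ (s : ℕ) < j + k then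
      extB (n + k) w (i + ((s : ℕ) - i) % (j - i)) else w s

noncomputable def patch (j : ℕ) (w : Word n k) (v : Fin k → Bool) : Word n k :=
  fun s => if h : j ≤ (s : ℕ) ∧ (s : ℕ) < j + k then v ⟨(s : ℕ) - j, by omega⟩ else w s

lemma extB_repair (i j : ℕ) (hj : j + k ≤ n + k) (w : Word n k) (s : ℕ) :
    extB (n + k) (repair n k i j w) s =
      if j ≤ s ∧ s < j + k then extB (n + k) w (i + (s - i) % (j - i))
      else extB (n + k) w s := by
  by_cases hs : s < n + k
  · rw [extB_lt _ hs]
    show repair n k i j w ⟨s, hs⟩ = _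
    unfold repair
    by_cases hwin : j ≤ s ∧ s < j + k
    · simp only [hwin, if_pos, and_self, if_true]
    · rw [if_neg hwin, if_neg hwin, extB_lt _ hs]
  · have h1 : ¬ (j ≤ s ∧ s < j + k) := by omega
    rw [if_neg h1]
    unfold extB
    rw [dif_neg hs, dif_neg hs]

lemma extB_patch (j : ℕ) (hj : j + k ≤ n + k) (w : Word n k) (v : Fin k → Bool) (s : ℕ) :
    extB (n + k) (patch n k j w v) s =
      if h : j ≤ s ∧ s < j + k then v ⟨s - j, by omega⟩ else extB (n + k) w s := by
  by_cases hs : s < n + k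
  · rw [extB_lt _ hs]
    show patch n k j w v ⟨s, hs⟩ = _
    unfold patch
    by_cases hwin : j ≤ s ∧ s < j + k
    · rw [dif_pos hwin, dif_pos hwin]
    · rw [dif_neg hwin, dif_neg hwin, extB_lt _ hs]
  · have h1 : ¬ (j ≤ s ∧ s < j + k) := by omega
    rw [dif_neg h1]
    unfold extB
    rw [dif_neg hs, dif_neg hs]

lemma bad_repair (i j : ℕ) (hij : i < j) (hjn : j < n) (w : Word n k) :
    Bad n k (i, j) (repair n k i j w) := by
  intro t ht
  show extB (n + k) (repair n k i j w) (i + t) = extB (n + k) (repair n k i j w) (j + t)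
  have hj : j + k ≤ n + k := by omega
  rw [extB_repair n k i j hj, extB_repair n k i j hj]
  have hrw : j ≤ j + t ∧ j + t < j + k := by omega
  rw [if_pos hrw]
  have e1 : j + t - i = t + (j - i) := by omega
  rw [e1, Nat.add_mod_right]
  by_cases hc : j ≤ i + t
  · have hw2 : j ≤ i + t ∧ i + t < j + k := by omega
    rw [if_pos hw2]
    have e4 : i + t - i = t := by omega
    rw [e4]
  · have h2 : ¬ (j ≤ i + t ∧ i + t < j + k) := by omega
    rw [if_neg h2]
    congr 1
    have : t % (j - i) = t := Nat.mod_eq_of_lt (by omega)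
    omega

lemma bad_iff_repair (i j : ℕ) (hj : j + k ≤ n + k) (w : Word n k) (q : ℕ × ℕ)
    (hq : Avoids k j q) : Bad n k q (repair n k i j w) ↔ Bad n k q w := by
  unfold Bad
  refine forall_congr' fun t => imp_congr_right fun ht => ?_
  rw [extB_repair n k i j hj, extB_repair n k i j hj,
    if_neg (hq t ht).1, if_neg (hq t ht).2]

lemma bad_iff_patch (j : ℕ) (hj : j + k ≤ n + k) (w : Word n k) (v : Fin k → Bool) (q : ℕ × ℕ)
    (hq : Avoids k j q) : Bad n k q (patch n k j w v) ↔ Bad n k q w := by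
  unfold Bad
  refine forall_congr' fun t => imp_congr_right fun ht => ?_
  rw [extB_patch n k j hj, extB_patch n k j hj,
    dif_neg (hq t ht).1, dif_neg (hq t ht).2]

lemma bad_periodic (i j : ℕ) (hij : i < j) (w : Word n k)
    (hb : Bad n k (i, j) w) :
    ∀ s, j ≤ s → s < j + k → extB (n + k) w s = extB (n + k) w (i + (s - i) % (j - i)) := by
  intro s
  induction s using Nat.strong_induction_on with
  | _ s ih =>
    intro hs1 hs2
    have ht : s - j < k := by omega
    have h1 := hb (s - j) ht
    have e1 : i + (s - j) = s - (j - i) := by omega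
    have e2 : j + (s - j) = s := by omega
    rw [e1, e2] at h1
    by_cases hc : j ≤ s - (j - i)
    · have h3 := ih (s - (j - i)) (by omega) hc (by omega)
      rw [← h1, h3]
      congr 2
      have e3 : s - i = (s - (j - i) - i) + (j - i) := by omega
      rw [e3, Nat.add_mod_right]
    · rw [← h1]
      congr 2
      have hd : j - i ≤ s - i := by omega
      rw [Nat.mod_eq_sub_mod hd, Nat.mod_eq_of_lt (by omega)]
      omega


lemma count_bad (e : ℕ × ℕ) (hij : e.1 < e.2) (hjn : e.2 < n) (S : Finset (ℕ × ℕ))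
    (hS : ∀ q ∈ S, Avoids k e.2 q) :
    (univ.filter (fun w : Word n k => Good n k S w ∧ Bad n k e w)).card * 2 ^ k =
      Ncount n k S := by
  obtain ⟨i, j⟩ := e
  simp only at hij hjn hS ⊢
  have hj : j + k ≤ n + k := by omega
  have hgr : ∀ w, Good n k S w → Good n k S (repair n k i j w) := by
    intro w hw q hq
    rw [bad_iff_repair n k i j hj w q (hS q hq)]
    exact hw q hq
  have hgp : ∀ w v, Good n k S w → Good n k S (patch n k j w v) := by
    intro w v hw q hq
    rw [bad_iff_patch n k j hj w v q (hS q hq)]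
    exact hw q hq
  let E : {w : Word n k // Good n k S w} ≃
      {w : Word n k // Good n k S w ∧ Bad n k (i, j) w} × (Fin k → Bool) :=
    { toFun := fun w => (⟨repair n k i j w.1, hgr w.1 w.2, bad_repair n k i j hij hjn w.1⟩,
        fun t => w.1 ⟨j + t, by have := t.isLt; omega⟩)
      invFun := fun p => ⟨patch n k j p.1.1 p.2, hgp _ _ p.1.2.1⟩
      left_inv := by
        rintro ⟨w, hw⟩
        apply Subtype.ext
        funext s
        show patch n k j (repair n k i j w) _ s = w s
        unfold patch
        by_cases hwin : j ≤ (s : ℕ) ∧ (s : ℕ) < j + k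
        · rw [dif_pos hwin]
          show w ⟨j + ((s : ℕ) - j), by have := s.isLt; omega⟩ = w s
          congr 1
          apply Fin.ext
          show j + ((s : ℕ) - j) = (s : ℕ)
          omega
        · rw [dif_neg hwin]
          show repair n k i j w s = w s
          unfold repair
          rw [if_neg hwin]
      right_inv := by
        rintro ⟨⟨w, hw, hbw⟩, v⟩
        apply Prod.ext
        · apply Subtype.ext
          funext s
          show repair n k i j (patch n k j w v) s = w s
          unfold repair
          by_cases hwin : j ≤ (s : ℕ) ∧ (s : ℕ) < j + k
          · rw [if_pos hwin]
            have hm1 : ((s : ℕ) - i) % (j - i) < j - i := Nat.mod_lt _ (by omega)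
            have hm2 : ¬ (j ≤ i + ((s : ℕ) - i) % (j - i) ∧
                i + ((s : ℕ) - i) % (j - i) < j + k) := by omega
            have hm3 : i + ((s : ℕ) - i) % (j - i) < n + k := by omega
            rw [extB_patch n k j hj, dif_neg hm2,
              ← bad_periodic n k i j hij w hbw s hwin.1 hwin.2, extB_lt _ s.isLt]
          · rw [if_neg hwin]
            show patch n k j w v s = w s
            unfold patch
            rw [dif_neg hwin]
        · funext t
          show patch n k j w v ⟨j + (t : ℕ), _⟩ = v t
          unfold patch
          have hwin : j ≤ j + (t : ℕ) ∧ j + (t : ℕ) < j + k := by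
            have := t.isLt; omega
          rw [dif_pos hwin]
          congr 1
          apply Fin.ext
          show j + (t : ℕ) - j = (t : ℕ)
          omega }
  have h1 : Fintype.card {w : Word n k // Good n k S w} =
      Fintype.card {w : Word n k // Good n k S w ∧ Bad n k (i, j) w} * 2 ^ k := by
    rw [Fintype.card_congr E, Fintype.card_prod]
    congr 1
    rw [Fintype.card_fun]
    simp
  calc (univ.filter (fun w : Word n k => Good n k S w ∧ Bad n k (i, j) w)).card * 2 ^ k
      = Fintype.card {w : Word n k // Good n k S w ∧ Bad n k (i, j) w} * 2 ^ k := by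
        rw [Fintype.card_subtype]
    _ = Fintype.card {w : Word n k // Good n k S w} := h1.symm
    _ = Ncount n k S := by rw [Ncount, Fintype.card_subtype]


def Nbhd (e : ℕ × ℕ) : Finset (ℕ × ℕ) :=
  (Pairs n).filter (fun q => (q.1 < e.2 + k ∧ e.2 < q.1 + k) ∨ (q.2 < e.2 + k ∧ e.2 < q.2 + k))

lemma nbhd_card (e : ℕ × ℕ) : (Nbhd n k e).card ≤ 4 * n * k := by
  have hsub : Nbhd n k e ⊆ (Finset.Ico (e.2 + 1 - k) (e.2 + k) ×ˢ range n) ∪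
      (range n ×ˢ Finset.Ico (e.2 + 1 - k) (e.2 + k)) := by
    intro q hq
    simp only [Nbhd, Pairs, mem_filter, mem_product, mem_range] at hq
    simp only [mem_union, mem_product, mem_Ico, mem_range]
    omega
  have h2 : e.2 + k - (e.2 + 1 - k) ≤ 2 * k := by omega
  calc (Nbhd n k e).card ≤ _ := card_le_card hsub
    _ ≤ (Finset.Ico (e.2 + 1 - k) (e.2 + k) ×ˢ range n).card +
        (range n ×ˢ Finset.Ico (e.2 + 1 - k) (e.2 + k)).card := card_union_le _ _
    _ ≤ 2 * k * n + n * (2 * k) := by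
        rw [card_product, card_product, card_range, Nat.card_Ico]
        exact Nat.add_le_add (Nat.mul_le_mul_right n h2) (Nat.mul_le_mul_left n h2)
    _ = 4 * n * k := by ring

lemma avoids_of_not_nbhd (e q : ℕ × ℕ) (hq : q ∈ Pairs n) (h : q ∉ Nbhd n k e) :
    Avoids k e.2 q := by
  intro t ht
  simp only [Nbhd, mem_filter, hq, true_and, not_or, not_and] at h
  constructor
  · intro hc
    exact absurd hc (by omega)
  · intro hc
    exact absurd hc (by omega)

lemma lll_step (hn : 0 < n) (hk : 0 < k)
    (hstar : (1 : ℝ) / 2 ^ k ≤ (1 / (4 * (n : ℝ) * k)) * (1 - 1 / (4 * (n : ℝ) * k)) ^ (4 * n * k)) :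
    ∀ m : ℕ, ∀ S ⊆ Pairs n, S.card = m → ∀ e ∈ Pairs n, e ∉ S →
      (1 - 1 / (4 * (n : ℝ) * k)) * (Ncount n k S : ℝ) ≤ (Ncount n k (insert e S) : ℝ) := by
  intro m
  induction m using Nat.strong_induction_on with
  | _ m ih =>
  intro S hSP hcard e heP heS
  set x : ℝ := 1 / (4 * (n : ℝ) * k) with hxdef
  have hn1 : (1 : ℝ) ≤ n := by exact_mod_cast hn
  have hk1 : (1 : ℝ) ≤ k := by exact_mod_cast hk
  have hnk : (4 : ℝ) ≤ 4 * (n : ℝ) * k := by nlinarith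
  have hx0 : 0 < x := by rw [hxdef]; positivity
  have hx14 : x ≤ 1 / 4 := by
    rw [hxdef]
    exact one_div_le_one_div_of_le (by norm_num) hnk
  have h1x : 0 < 1 - x := by linarith
  set S' := S \ Nbhd n k e with hS'def
  have hS'S : S' ⊆ S := sdiff_subset
  -- the chain lemma
  have chain : ∀ r : ℕ, ∀ T : Finset (ℕ × ℕ), S' ⊆ T → T ⊆ S → (T \ S').card = r →
      (1 - x) ^ r * (Ncount n k S' : ℝ) ≤ (Ncount n k T : ℝ) := by
    intro r
    induction r with
    | zero =>
      intro T h1 h2 h3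
      have hT : T = S' := by
        have h4 : T \ S' = ∅ := Finset.card_eq_zero.mp h3
        apply Finset.Subset.antisymm _ h1
        intro b hb
        by_contra hc
        have : b ∈ T \ S' := Finset.mem_sdiff.mpr ⟨hb, hc⟩
        rw [h4] at this
        exact absurd this (Finset.notMem_empty b)
      rw [hT, pow_zero, one_mul]
    | succ r ihr =>
      intro T h1 h2 h3
      have hne : (T \ S').Nonempty := by rw [← Finset.card_pos, h3]; omega
      obtain ⟨b, hb⟩ := hne
      have hbT : b ∈ T := (Finset.mem_sdiff.mp hb).1
      have hbS' : b ∉ S' := (Finset.mem_sdiff.mp hb).2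
      have h1' : S' ⊆ T.erase b :=
        fun c hc => Finset.mem_erase.mpr ⟨fun hcb => hbS' (hcb ▸ hc), h1 hc⟩
      have h2' : T.erase b ⊆ S := (Finset.erase_subset b T).trans h2
      have h3' : (T.erase b \ S').card = r := by
        have he : T.erase b \ S' = (T \ S').erase b := by
          ext c
          simp only [Finset.mem_sdiff, Finset.mem_erase]
          tauto
        rw [he, Finset.card_erase_of_mem hb, h3]
        omega
      have hcardlt : (T.erase b).card < m := by
        have e1 := Finset.card_erase_of_mem hbT
        have e2 : T.card ≤ S.card := Finset.card_le_card h2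
        have e3 : 0 < T.card := Finset.card_pos.mpr ⟨b, hbT⟩
        omega
      have step := ih (T.erase b).card hcardlt (T.erase b) (h2'.trans hSP) rfl b
        (hSP (h2 hbT)) (Finset.notMem_erase b T)
      rw [Finset.insert_erase hbT] at step
      calc (1 - x) ^ (r + 1) * (Ncount n k S' : ℝ)
          = (1 - x) * ((1 - x) ^ r * (Ncount n k S' : ℝ)) := by ring
        _ ≤ (1 - x) * (Ncount n k (T.erase b) : ℝ) :=
            mul_le_mul_of_nonneg_left (ihr _ h1' h2' h3') h1x.le
        _ ≤ (Ncount n k T : ℝ) := step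
  -- split the count
  have hsplit : (univ.filter (fun w : Word n k => Good n k S w ∧ Bad n k e w)).card +
      Ncount n k (insert e S) = Ncount n k S := by
    have h4 := Finset.card_filter_add_card_filter_not
      (s := univ.filter (fun w : Word n k => Good n k S w)) (p := fun w => Bad n k e w)
    rw [Finset.filter_filter, Finset.filter_filter] at h4
    simp only [Ncount]
    rw [← h4]
    congr 1
    apply congrArg Finset.card
    apply Finset.filter_congr
    intro w _
    unfold Good
    rw [Finset.forall_mem_insert]
    tauto
  -- monotonicity
  have hM : (univ.filter (fun w : Word n k => Good n k S w ∧ Bad n k e w)).card ≤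
      (univ.filter (fun w : Word n k => Good n k S' w ∧ Bad n k e w)).card := by
    apply Finset.card_le_card
    intro w hw
    simp only [Finset.mem_filter, Finset.mem_univ, true_and] at hw ⊢
    exact ⟨fun q hq => hw.1 q (hS'S hq), hw.2⟩
  -- exact count on S'
  have heP' : e.1 < e.2 ∧ e.2 < n := by
    simp only [Pairs, mem_filter, mem_product, mem_range] at heP
    tauto
  have hA : (univ.filter (fun w : Word n k => Good n k S' w ∧ Bad n k e w)).card * 2 ^ k =
      Ncount n k S' :=
    count_bad n k e heP'.1 heP'.2 S' (fun q hq =>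
      avoids_of_not_nbhd n k e q (hSP (hS'S hq)) (Finset.mem_sdiff.mp hq).2)
  -- chain applied to S
  have hr : (S \ S').card ≤ 4 * n * k := by
    have hsub : S \ S' ⊆ Nbhd n k e := by
      intro c hc
      have h5 := Finset.mem_sdiff.mp hc
      by_contra hcn
      exact h5.2 (Finset.mem_sdiff.mpr ⟨h5.1, hcn⟩)
    exact le_trans (Finset.card_le_card hsub) (nbhd_card n k e)
  have hchainS := chain (S \ S').card S hS'S (Finset.Subset.refl S) rfl
  have hpow : (1 - x) ^ (4 * n * k) ≤ (1 - x) ^ (S \ S').card :=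
    pow_le_pow_of_le_one h1x.le (by linarith) hr
  have hNS' : (1 - x) ^ (4 * n * k) * (Ncount n k S' : ℝ) ≤ (Ncount n k S : ℝ) :=
    le_trans (mul_le_mul_of_nonneg_right hpow (Nat.cast_nonneg _)) hchainS
  -- final arithmetic
  set P : ℝ := (1 - x) ^ (4 * n * k) with hPdef
  have hP : 0 < P := pow_pos h1x _
  have h2k : (0 : ℝ) < 2 ^ k := by positivity
  have hMM' : ((univ.filter (fun w : Word n k => Good n k S w ∧ Bad n k e w)).card : ℝ) ≤
      ((univ.filter (fun w : Word n k => Good n k S' w ∧ Bad n k e w)).card : ℝ) := by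
    exact_mod_cast hM
  have hA' : ((univ.filter (fun w : Word n k => Good n k S' w ∧ Bad n k e w)).card : ℝ) * 2 ^ k
      = (Ncount n k S' : ℝ) := by exact_mod_cast hA
  have hsplit' : ((univ.filter (fun w : Word n k => Good n k S w ∧ Bad n k e w)).card : ℝ) +
      (Ncount n k (insert e S) : ℝ) = (Ncount n k S : ℝ) := by exact_mod_cast hsplit
  have hM'0 : (0 : ℝ) ≤
      ((univ.filter (fun w : Word n k => Good n k S' w ∧ Bad n k e w)).card : ℝ) :=
    Nat.cast_nonneg _
  have h6 : ((univ.filter (fun w : Word n k => Good n k S' w ∧ Bad n k e w)).card : ℝ) * 2 ^ k * P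
      ≤ (Ncount n k S : ℝ) := by
    rw [hA']
    calc (Ncount n k S' : ℝ) * P = P * (Ncount n k S' : ℝ) := by ring
      _ ≤ _ := hNS'
  have h8 : (1 : ℝ) ≤ x * P * 2 ^ k := by
    have h7 : (1 : ℝ) / 2 ^ k ≤ x * P := hstar
    rw [div_le_iff₀ h2k] at h7
    linarith
  have hMle : ((univ.filter (fun w : Word n k => Good n k S' w ∧ Bad n k e w)).card : ℝ) ≤
      x * (Ncount n k S : ℝ) := by
    calc ((univ.filter (fun w : Word n k => Good n k S' w ∧ Bad n k e w)).card : ℝ)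
        = _ * 1 := (mul_one _).symm
      _ ≤ _ * (x * P * 2 ^ k) := mul_le_mul_of_nonneg_left h8 hM'0
      _ = x * (_ * 2 ^ k * P) := by ring
      _ ≤ x * (Ncount n k S : ℝ) := mul_le_mul_of_nonneg_left h6 hx0.le
  linarith


lemma ncount_empty : Ncount n k ∅ = 2 ^ (n + k) := by
  rw [Ncount]
  have h1 : univ.filter (fun w : Word n k => Good n k (∅ : Finset (ℕ × ℕ)) w) = univ := by
    apply Finset.filter_true_of_mem
    intro w _
    intro p hp
    exact absurd hp (Finset.notMem_empty p)
  rw [h1, Finset.card_univ]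
  simp [Fintype.card_fun]

lemma lll_all (hn : 0 < n) (hk : 0 < k)
    (hstar : (1 : ℝ) / 2 ^ k ≤ (1 / (4 * (n : ℝ) * k)) * (1 - 1 / (4 * (n : ℝ) * k)) ^ (4 * n * k)) :
    ∀ S ⊆ Pairs n,
      (1 - 1 / (4 * (n : ℝ) * k)) ^ S.card * 2 ^ (n + k) ≤ (Ncount n k S : ℝ) := by
  intro S
  induction S using Finset.induction_on with
  | empty =>
    intro _
    rw [ncount_empty]
    simp only [Finset.card_empty, pow_zero, one_mul]
    rw [Nat.cast_pow]
    norm_num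
  | @insert b S hbS ih =>
    intro hsub
    have hbP : b ∈ Pairs n := hsub (Finset.mem_insert_self b S)
    have hSP : S ⊆ Pairs n := fun c hc => hsub (Finset.mem_insert_of_mem hc)
    have h1 := lll_step n k hn hk hstar S.card S hSP rfl b hbP hbS
    have hx14 : (1 : ℝ) - 1 / (4 * (n : ℝ) * k) ≤ 1 := by
      have : (0:ℝ) < 4 * (n : ℝ) * k := by
        have hn1 : (1 : ℝ) ≤ n := by exact_mod_cast hn
        have hk1 : (1 : ℝ) ≤ k := by exact_mod_cast hk
        nlinarith
      have : 0 < 1 / (4 * (n : ℝ) * k) := by positivity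
      linarith
    rw [Finset.card_insert_of_notMem hbS]
    calc (1 - 1 / (4 * (n : ℝ) * k)) ^ (S.card + 1) * 2 ^ (n + k)
        = (1 - 1 / (4 * (n : ℝ) * k)) *
          ((1 - 1 / (4 * (n : ℝ) * k)) ^ S.card * 2 ^ (n + k)) := by ring
      _ ≤ (1 - 1 / (4 * (n : ℝ) * k)) * (Ncount n k S : ℝ) := by
          apply mul_le_mul_of_nonneg_left (ih hSP)
          have hn1 : (1 : ℝ) ≤ n := by exact_mod_cast hn
          have hk1 : (1 : ℝ) ≤ k := by exact_mod_cast hk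
          have h4 : (4:ℝ) ≤ 4 * (n : ℝ) * k := by nlinarith
          have : 1 / (4 * (n : ℝ) * k) ≤ 1 / 4 :=
            one_div_le_one_div_of_le (by norm_num) h4
          linarith
      _ ≤ (Ncount n k (insert b S) : ℝ) := h1

lemma pairs_card_le : (Pairs n).card ≤ n ^ 2 := by
  calc (Pairs n).card ≤ ((Finset.range n) ×ˢ (Finset.range n)).card :=
        Finset.card_le_card (Finset.filter_subset _ _)
    _ = n ^ 2 := by rw [Finset.card_product, Finset.card_range]; ring

lemma star_of_big (hn : 0 < n) (hk : 0 < k) (hbig : (36 : ℝ) * n * k ≤ 2 ^ k) :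
    (1 : ℝ) / 2 ^ k ≤ (1 / (4 * (n : ℝ) * k)) * (1 - 1 / (4 * (n : ℝ) * k)) ^ (4 * n * k) := by
  have hn1 : (1 : ℝ) ≤ n := by exact_mod_cast hn
  have hk1 : (1 : ℝ) ≤ k := by exact_mod_cast hk
  set m : ℕ := 4 * n * k with hmdef
  have hm4 : (4 : ℝ) ≤ (m : ℝ) := by
    have : (4 : ℕ) ≤ m := by
      rw [hmdef]; nlinarith [hn, hk]
    exact_mod_cast this
  have hm0 : (0 : ℝ) < (m : ℝ) := by linarith
  have hmcast : ((m : ℕ) : ℝ) = 4 * (n : ℝ) * k := by push_cast [hmdef]; ring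
  set x : ℝ := 1 / (4 * (n : ℝ) * k) with hxdef
  have hxm : x = 1 / (m : ℝ) := by rw [hxdef, hmcast]
  have hx0 : 0 < x := by rw [hxm]; positivity
  have hx14 : x ≤ 1 / 4 := by
    rw [hxm]
    exact one_div_le_one_div_of_le (by norm_num) hm4
  -- (1 - x) ≥ 1/(1+2x)
  have h12x : (0 : ℝ) < 1 + 2 * x := by linarith
  have hkey : 1 / (1 + 2 * x) ≤ 1 - x := by
    rw [div_le_iff₀ h12x]
    nlinarith
  -- (1+2x)^m ≤ exp 2 ≤ 9
  have hexp : (1 + 2 * x) ^ m ≤ Real.exp 2 := by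
    have h1 : 1 + 2 * x ≤ Real.exp (2 * x) := by
      have := Real.add_one_le_exp (2 * x)
      linarith
    calc (1 + 2 * x) ^ m ≤ (Real.exp (2 * x)) ^ m := by
          apply pow_le_pow_left₀ (by linarith) h1
      _ = Real.exp ((m : ℝ) * (2 * x)) := by rw [← Real.exp_nat_mul]
      _ = Real.exp 2 := by
          congr 1
          rw [hxm]
          field_simp
  have hexp9 : Real.exp 2 ≤ 9 := by
    have h1 : Real.exp 2 = Real.exp 1 * Real.exp 1 := by
      rw [← Real.exp_add]; norm_num
    have h2 := Real.exp_one_lt_d9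
    nlinarith [Real.exp_pos 1]
  -- (1-x)^m ≥ 1/9
  have hpow9 : (1 : ℝ) / 9 ≤ (1 - x) ^ m := by
    have h1 : (1 / (1 + 2 * x)) ^ m ≤ (1 - x) ^ m :=
      pow_le_pow_left₀ (by positivity) hkey m
    have h2 : (1 / (1 + 2 * x)) ^ m = 1 / (1 + 2 * x) ^ m := by
      rw [div_pow, one_pow]
    have h3 : (1 : ℝ) / 9 ≤ 1 / (1 + 2 * x) ^ m := by
      apply one_div_le_one_div_of_le
      · positivity
      · linarith
    linarith
  -- conclude
  have h36 : (0 : ℝ) < 36 * (n : ℝ) * k := by nlinarith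
  have h1 : (1 : ℝ) / 2 ^ k ≤ 1 / (36 * (n : ℝ) * k) := by
    apply one_div_le_one_div_of_le h36 hbig
  have h2 : (1 : ℝ) / (36 * (n : ℝ) * k) = x * (1 / 9) := by
    rw [hxdef]
    field_simp
    ring
  calc (1 : ℝ) / 2 ^ k ≤ x * (1 / 9) := by rw [← h2]; exact h1
    _ ≤ x * (1 - x) ^ m := mul_le_mul_of_nonneg_left hpow9 hx0.le


lemma ncount_pairs_eq : Ncount n k (Pairs n) =
    Nat.card {w : Fin (n + k) → Bool //
      ∀ i j : ℕ, i < j → j < n →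
        ∃ t < k, extB (n + k) w (i + t) ≠ extB (n + k) w (j + t)} := by
  rw [Nat.card_eq_fintype_card, Fintype.card_subtype, Ncount]
  apply congrArg Finset.card
  apply Finset.filter_congr
  intro w _
  constructor
  · intro hg i j hij hjn
    have hp : (i, j) ∈ Pairs n := by
      simp only [Pairs, mem_filter, mem_product, mem_range]
      omega
    have hb := hg (i, j) hp
    unfold Bad at hb
    push_neg at hb
    obtain ⟨t, ht, hne⟩ := hb
    exact ⟨t, ht, hne⟩
  · intro hg p hp hbad
    simp only [Pairs, mem_filter, mem_product, mem_range] at hp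
    obtain ⟨t, ht, hne⟩ := hg p.1 p.2 hp.2 hp.1.2
    exact hne (hbad t ht)

lemma eventually_log (a : ℝ) (ha : 1 < a) :
    ∀ᶠ t : ℝ in Filter.atTop, 72 * a * Real.logb 2 t ≤ t ^ (a - 1) := by
  have h0 : (0 : ℝ) < a - 1 := by linarith
  have hlo := isLittleO_log_rpow_atTop h0
  have hlog2 : (0 : ℝ) < Real.log 2 := Real.log_pos (by norm_num)
  have ha0 : (0 : ℝ) < a := by linarith
  have hc : (0 : ℝ) < Real.log 2 / (72 * a) := by positivity
  have h1 := hlo.def hc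
  filter_upwards [h1, Filter.eventually_ge_atTop (1 : ℝ)] with t h2 h3
  rw [Real.norm_eq_abs, Real.norm_eq_abs, abs_of_nonneg (Real.log_nonneg h3),
    abs_of_nonneg (Real.rpow_nonneg (by linarith) _)] at h2
  rw [Real.logb]
  have hl2 : Real.log 2 ≠ 0 := ne_of_gt hlog2
  have ha' : (72 : ℝ) * a ≠ 0 := by positivity
  calc 72 * a * (Real.log t / Real.log 2) = (72 * a / Real.log 2) * Real.log t := by ring
    _ ≤ (72 * a / Real.log 2) * (Real.log 2 / (72 * a) * t ^ (a - 1)) :=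
        mul_le_mul_of_nonneg_left h2 (by positivity)
    _ = t ^ (a - 1) := by
        field_simp

end RF6

/-- For uniformly random binary sequences of length `n + k` with `k = ⌊a log₂ n⌋` and `a > 1`,
the probability that all length-`k` windows starting in the first `n` positions are pairwise
distinct is at least `(1 - 1/(4nk))^{n²}` for all sufficiently large `n` (stated by counting:
the number of such words is at least that fraction of `2^{n+k}`). -/
theorem stmt_6 (a : ℝ) (ha : 1 < a) :
    ∃ N : ℕ, ∀ n ≥ N, ∀ k : ℕ, k = ⌊a * Real.logb 2 n⌋₊ →
      (1 - 1 / (4 * (n : ℝ) * k)) ^ (n ^ 2) * 2 ^ (n + k) ≤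
        (Nat.card {w : Fin (n + k) → Bool //
          ∀ i j : ℕ, i < j → j < n →
            ∃ t < k, extB (n + k) w (i + t) ≠ extB (n + k) w (j + t)} : ℝ) := by
  obtain ⟨M, hM⟩ := Filter.eventually_atTop.mp (RF6.eventually_log a ha)
  refine ⟨max 2 ⌈M⌉₊, fun n hn k hkdef => ?_⟩
  have hn2 : 2 ≤ n := le_trans (le_max_left _ _) hn
  have hnM : M ≤ (n : ℝ) := Nat.ceil_le.mp (le_trans (le_max_right _ _) hn)
  have hn0 : 0 < n := by omega
  have hn0R : (0 : ℝ) < n := by exact_mod_cast hn0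
  have h2R : (2 : ℝ) ≤ n := by exact_mod_cast hn2
  have hlog2 : (0 : ℝ) < Real.log 2 := Real.log_pos (by norm_num)
  have hlogb1 : 1 ≤ Real.logb 2 n := by
    rw [Real.logb, le_div_iff₀ hlog2, one_mul]
    exact Real.log_le_log (by norm_num) h2R
  have hy1 : 1 ≤ a * Real.logb 2 n := by nlinarith
  have hy0 : 0 ≤ a * Real.logb 2 n := by linarith
  have hk1 : 1 ≤ k := by
    rw [hkdef]
    exact Nat.le_floor (by exact_mod_cast hy1)
  have hk0 : 0 < k := hk1
  have hkley : (k : ℝ) ≤ a * Real.logb 2 n := hkdef ▸ Nat.floor_le hy0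
  have hylt : a * Real.logb 2 n < (k : ℝ) + 1 := by
    rw [hkdef]
    push_cast
    exact Nat.lt_floor_add_one _
  have hk0R : (0 : ℝ) ≤ k := Nat.cast_nonneg k
  -- 2^k ≥ n^a / 2
  have hbig : (36 : ℝ) * n * k ≤ 2 ^ k := by
    have hrp0 : (2 : ℝ) ^ (k : ℕ) = (2 : ℝ) ^ ((k : ℕ) : ℝ) := (Real.rpow_natCast 2 k).symm
    have hrp1 : (2 : ℝ) ^ (a * Real.logb 2 n - 1) ≤ (2 : ℝ) ^ ((k : ℕ) : ℝ) :=
      Real.rpow_le_rpow_of_exponent_le (by norm_num) (by linarith)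
    have hrp2 : (2 : ℝ) ^ (a * Real.logb 2 n) = (n : ℝ) ^ a := by
      rw [mul_comm, Real.rpow_mul (by norm_num : (0:ℝ) ≤ 2), Real.rpow_logb (by norm_num)
        (by norm_num) hn0R]
    have hrp3 : (2 : ℝ) ^ (a * Real.logb 2 n - 1) = (n : ℝ) ^ a / 2 := by
      rw [Real.rpow_sub (by norm_num : (0:ℝ) < 2), Real.rpow_one, hrp2]
    have hmul : (n : ℝ) * (n : ℝ) ^ (a - 1) = (n : ℝ) ^ a := by
      have h5 := Real.rpow_add hn0R 1 (a - 1)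
      rw [Real.rpow_one] at h5
      have h6 : 1 + (a - 1) = a := by ring
      rw [h6] at h5
      exact h5.symm
    have h7 : 72 * a * Real.logb 2 n ≤ (n : ℝ) ^ (a - 1) := hM n hnM
    have h8 : (72 : ℝ) * n * k ≤ (n : ℝ) ^ a := by
      calc (72 : ℝ) * n * k ≤ 72 * n * (a * Real.logb 2 n) := by
            apply mul_le_mul_of_nonneg_left hkley (by positivity)
        _ = (n : ℝ) * (72 * a * Real.logb 2 n) := by ring
        _ ≤ (n : ℝ) * (n : ℝ) ^ (a - 1) := mul_le_mul_of_nonneg_left h7 hn0R.le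
        _ = (n : ℝ) ^ a := hmul
    calc (36 : ℝ) * n * k ≤ (n : ℝ) ^ a / 2 := by linarith
      _ = (2 : ℝ) ^ (a * Real.logb 2 n - 1) := hrp3.symm
      _ ≤ (2 : ℝ) ^ ((k : ℕ) : ℝ) := hrp1
      _ = (2 : ℝ) ^ (k : ℕ) := hrp0.symm
  have hstar := RF6.star_of_big n k hn0 hk0 hbig
  have hall := RF6.lll_all n k hn0 hk0 hstar (RF6.Pairs n) (Finset.Subset.refl _)
  rw [← RF6.ncount_pairs_eq]
  have hn1R : (1 : ℝ) ≤ n := by linarith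
  have hk1R : (1 : ℝ) ≤ k := by exact_mod_cast hk1
  have h4 : (4 : ℝ) ≤ 4 * (n : ℝ) * k := by nlinarith
  have hx0 : 0 < 1 / (4 * (n : ℝ) * k) := by positivity
  have hx14 : 1 / (4 * (n : ℝ) * k) ≤ 1 / 4 := one_div_le_one_div_of_le (by norm_num) h4
  have hpowle : (1 - 1 / (4 * (n : ℝ) * k)) ^ (n ^ 2) ≤
      (1 - 1 / (4 * (n : ℝ) * k)) ^ (RF6.Pairs n).card :=
    pow_le_pow_of_le_one (by linarith) (by linarith) (RF6.pairs_card_le n)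
  calc (1 - 1 / (4 * (n : ℝ) * k)) ^ (n ^ 2) * 2 ^ (n + k)
      ≤ (1 - 1 / (4 * (n : ℝ) * k)) ^ (RF6.Pairs n).card * 2 ^ (n + k) :=
        mul_le_mul_of_nonneg_right hpowle (by positivity)
    _ ≤ (RF6.Ncount n k (RF6.Pairs n) : ℝ) := hall
end

section
/- The capacity of binary k-repeat-free sequences with k = ⌊a log₂ n⌋ equals 1 for every a > 1; that is, limsup_{n→∞} (1/n) log₂ |W_a(n)| = 1, where W_a(n) is the set of length-n binary words in which every k-tuple appears at most once. -/
set_option linter.unusedSectionVars false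
set_option linter.unusedVariables false
set_option maxHeartbeats 1000000

open Finset

section LLL
variable {N : ℕ} {α : Type} [DecidableEq α]

/-- Words avoiding all events in `S`. -/
def avoidSet (A : α → Finset (Fin N → Bool)) (S : Finset α) : Finset (Fin N → Bool) :=
  univ.filter (fun w => ∀ e ∈ S, w ∉ A e)

lemma mem_avoidSet {A : α → Finset (Fin N → Bool)} {S : Finset α} {w : Fin N → Bool} :
    w ∈ avoidSet A S ↔ ∀ e ∈ S, w ∉ A e := by simp [avoidSet]

lemma avoidSet_anti {A : α → Finset (Fin N → Bool)} {S T : Finset α} (h : S ⊆ T) :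
    avoidSet A T ⊆ avoidSet A S := by
  intro w hw
  rw [mem_avoidSet] at *
  exact fun e he => hw e (h he)

lemma avoidSet_insert {A : α → Finset (Fin N → Bool)} {S : Finset α} {f : α} :
    avoidSet A (insert f S) = avoidSet A S \ A f := by
  ext w
  simp only [mem_avoidSet, mem_sdiff, Finset.mem_insert]
  constructor
  · intro h; exact ⟨fun e he => h e (Or.inr he), h f (Or.inl rfl)⟩
  · rintro ⟨h1, h2⟩ e (rfl | he)
    · exact h2
    · exact h1 e he

/-- Independence: if `A` depends only on coordinates in `s` and `C` only on the rest,
then counts multiply. -/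
lemma indep_card (s : Finset (Fin N)) (A C : Finset (Fin N → Bool))
    (hA : ∀ w w' : Fin N → Bool, (∀ i ∈ s, w i = w' i) → w ∈ A → w' ∈ A)
    (hC : ∀ w w' : Fin N → Bool, (∀ i, i ∉ s → w i = w' i) → w ∈ C → w' ∈ C) :
    A.card * C.card = (A ∩ C).card * 2 ^ N := by
  classical
  have key : (A ×ˢ C).card = ((A ∩ C) ×ˢ (univ : Finset (Fin N → Bool))).card := by
    apply Finset.card_bij'
      (i := fun p _ => ((fun i => if i ∈ s then p.1 i else p.2 i : Fin N → Bool),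
                        (fun i => if i ∈ s then p.2 i else p.1 i : Fin N → Bool)))
      (j := fun p _ => ((fun i => if i ∈ s then p.1 i else p.2 i : Fin N → Bool),
                        (fun i => if i ∈ s then p.2 i else p.1 i : Fin N → Bool)))
    · rintro ⟨w, v⟩ hp
      rw [Finset.mem_product] at hp
      rw [Finset.mem_product]
      refine ⟨Finset.mem_inter.2 ⟨?_, ?_⟩, Finset.mem_univ _⟩
      · exact hA w _ (fun i hi => by simp [hi]) hp.1
      · exact hC v _ (fun i hi => by simp [hi]) hp.2
    · rintro ⟨u₁, u₂⟩ hp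
      rw [Finset.mem_product] at hp
      have h1 := Finset.mem_inter.1 hp.1
      rw [Finset.mem_product]
      constructor
      · exact hA u₁ _ (fun i hi => by simp [hi]) h1.1
      · exact hC u₁ _ (fun i hi => by simp [hi]) h1.2
    · rintro ⟨w, v⟩ _
      simp only [Prod.mk.injEq]
      constructor <;> (funext i; by_cases hi : i ∈ s <;> simp [hi])
    · rintro ⟨u₁, u₂⟩ _
      simp only [Prod.mk.injEq]
      constructor <;> (funext i; by_cases hi : i ∈ s <;> simp [hi])
  rw [Finset.card_product, Finset.card_product, card_univ, Fintype.card_fun,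
    Fintype.card_bool, Fintype.card_fin] at key
  exact key

variable (A : α → Finset (Fin N → Bool)) (vbl : α → Finset (Fin N)) (E : Finset α)
  (D : ℕ) (x : ℝ)

/-- Peeling lemma. -/
lemma lll_peel (hx1 : x < 1) (M : ℕ)
    (hmain : ∀ T ⊆ E, T.card < M → ∀ e ∈ E,
      ((A e ∩ avoidSet A T).card : ℝ) ≤ x * (avoidSet A T).card)
    (U₀ B : Finset α) (hUB : U₀ ∪ B ⊆ E) (hM : (U₀ ∪ B).card ≤ M) (hdisj : Disjoint U₀ B) :
    ∀ U ⊆ U₀, (1 - x) ^ U.card * ((avoidSet A B).card : ℝ) ≤ ((avoidSet A (U ∪ B)).card : ℝ) := by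
  intro U
  induction U using Finset.induction_on with
  | empty => intro _; simp
  | insert _ _ ha =>
    rename_i a U IH
    intro hsub
    have haU₀ : a ∈ U₀ := hsub (Finset.mem_insert_self _ _)
    have hU : U ⊆ U₀ := fun y hy => hsub (Finset.mem_insert_of_mem hy)
    have hanB : a ∉ B := fun h => (Finset.disjoint_left.1 hdisj) haU₀ h
    have hanT : a ∉ U ∪ B := by
      simp only [Finset.mem_union]; rintro (h | h); exacts [ha h, hanB h]
    have hTsub : U ∪ B ⊆ U₀ ∪ B := Finset.union_subset_union_left hU
    have hTE : U ∪ B ⊆ E := hTsub.trans hUB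
    have haE : a ∈ E := hUB (Finset.mem_union_left _ haU₀)
    have hTcard : (U ∪ B).card < M := by
      have h1 : U ∪ B ⊆ (U₀ ∪ B).erase a :=
        Finset.subset_erase.2 ⟨hTsub, hanT⟩
      have h2 : ((U₀ ∪ B).erase a).card < (U₀ ∪ B).card :=
        Finset.card_erase_lt_of_mem (Finset.mem_union_left _ haU₀)
      exact lt_of_le_of_lt (Finset.card_le_card h1) (lt_of_lt_of_le h2 hM)
    have hstep := hmain (U ∪ B) hTE hTcard a haE
    have hins : insert a U ∪ B = insert a (U ∪ B) := Finset.insert_union a U B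
    have hsd : avoidSet A (insert a (U ∪ B)) = avoidSet A (U ∪ B) \ A a := avoidSet_insert
    have hcardeq : ((avoidSet A (U ∪ B) \ A a).card : ℝ) =
        ((avoidSet A (U ∪ B)).card : ℝ) - ((avoidSet A (U ∪ B) ∩ A a).card : ℝ) := by
      have := Finset.card_sdiff_add_card_inter (avoidSet A (U ∪ B)) (A a)
      have := congrArg (fun n : ℕ => (n : ℝ)) this
      push_cast at this
      linarith
    have hint : ((avoidSet A (U ∪ B) ∩ A a).card : ℝ) ≤ x * (avoidSet A (U ∪ B)).card := by
      rwa [Finset.inter_comm] at hstep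
    have hx0' : (0:ℝ) ≤ 1 - x := by linarith
    calc (1 - x) ^ (insert a U).card * ((avoidSet A B).card : ℝ)
        = (1 - x) * ((1 - x) ^ U.card * ((avoidSet A B).card : ℝ)) := by
          rw [Finset.card_insert_of_notMem ha]; ring
      _ ≤ (1 - x) * ((avoidSet A (U ∪ B)).card : ℝ) := by
          apply mul_le_mul_of_nonneg_left (IH hU) hx0'
      _ ≤ ((avoidSet A (insert a U ∪ B)).card : ℝ) := by
          rw [hins, hsd, hcardeq]; nlinarith [hint]

/-- Main LLL inductive bound. -/
lemma lll_main
    (hdep : ∀ e, ∀ w w' : Fin N → Bool, (∀ i ∈ vbl e, w i = w' i) → w ∈ A e → w' ∈ A e)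
    (hx0 : 0 < x) (hx1 : x < 1)
    (hp : ∀ e ∈ E, ((A e).card : ℝ) ≤ x * (1 - x) ^ D * 2 ^ N)
    (hD : ∀ e ∈ E, (E.filter (fun f => ¬ Disjoint (vbl e) (vbl f))).card ≤ D) :
    ∀ m : ℕ, ∀ S ⊆ E, S.card ≤ m → ∀ e ∈ E,
      ((A e ∩ avoidSet A S).card : ℝ) ≤ x * (avoidSet A S).card := by
  intro m
  induction m using Nat.strong_induction_on with
  | _ m ih =>
    intro S hSE hSm e heE
    classical
    set S₁ := S.filter (fun f => ¬ Disjoint (vbl e) (vbl f)) with hS₁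
    set S₂ := S.filter (fun f => ¬ ¬ Disjoint (vbl e) (vbl f)) with hS₂
    have hS₂' : ∀ f ∈ S₂, Disjoint (vbl e) (vbl f) := by
      intro f hf
      have := (Finset.mem_filter.1 hf).2
      exact not_not.1 this
    have hunion : S₁ ∪ S₂ = S := Finset.filter_union_filter_not_eq _ S
    have hdisj : Disjoint S₁ S₂ := Finset.disjoint_filter_filter_not S S _
    have hS₁E : S₁ ⊆ E := (Finset.filter_subset _ _).trans hSE
    have hS₂E : S₂ ⊆ E := (Finset.filter_subset _ _).trans hSE
    have hS₂S : S₂ ⊆ S := Finset.filter_subset _ _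
    -- peel
    have hmain : ∀ T ⊆ E, T.card < m → ∀ e' ∈ E,
        ((A e' ∩ avoidSet A T).card : ℝ) ≤ x * (avoidSet A T).card :=
      fun T hTE hT e' he' => ih T.card hT T hTE le_rfl e' he'
    have hpeel := lll_peel A E x hx1 m hmain S₁ S₂ (by rw [hunion]; exact hSE)
      (by rw [hunion]; exact hSm) hdisj S₁ (Finset.Subset.refl _)
    rw [hunion] at hpeel
    -- independence
    have hprodN := indep_card (vbl e) (A e) (avoidSet A S₂) (hdep e)
      (by
        intro w w' hag hw
        rw [mem_avoidSet] at *
        intro f hf hw'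
        have hdisjf := hS₂' f hf
        have : w ∈ A f := by
          apply hdep f w' w _ hw'
          intro i hi
          have : i ∉ vbl e := fun h => (Finset.disjoint_left.1 hdisjf) h hi
          exact (hag i this).symm
        exact hw f hf this)
    have hprod : ((A e).card : ℝ) * ((avoidSet A S₂).card : ℝ)
        = ((A e ∩ avoidSet A S₂).card : ℝ) * 2 ^ N := by
      have := congrArg (fun n : ℕ => (n : ℝ)) hprodN
      push_cast at this
      exact this
    have hsub1 : ((A e ∩ avoidSet A S).card : ℝ) ≤ ((A e ∩ avoidSet A S₂).card : ℝ) := by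
      exact_mod_cast Finset.card_le_card
        (Finset.inter_subset_inter (Finset.Subset.refl _) (avoidSet_anti hS₂S))
    have hS₁D : S₁.card ≤ D := by
      refine le_trans (Finset.card_le_card ?_) (hD e heE)
      exact Finset.filter_subset_filter _ hSE
    have h2N : (0:ℝ) < 2 ^ N := by positivity
    have hx0' : (0:ℝ) < 1 - x := by linarith
    have hc₁ : (0:ℝ) < (1 - x) ^ S₁.card := by positivity
    rw [← mul_le_mul_iff_right₀ (mul_pos hc₁ h2N)]
    calc (1 - x) ^ S₁.card * 2 ^ N * ((A e ∩ avoidSet A S).card : ℝ)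
        ≤ (1 - x) ^ S₁.card * 2 ^ N * ((A e ∩ avoidSet A S₂).card : ℝ) := by
          apply mul_le_mul_of_nonneg_left hsub1 (le_of_lt (mul_pos hc₁ h2N))
      _ = (1 - x) ^ S₁.card * (((A e).card : ℝ) * ((avoidSet A S₂).card : ℝ)) := by
          rw [hprod]; ring
      _ ≤ (1 - x) ^ S₁.card * ((x * (1 - x) ^ D * 2 ^ N) * ((avoidSet A S₂).card : ℝ)) := by
          apply mul_le_mul_of_nonneg_left _ (le_of_lt hc₁)
          apply mul_le_mul_of_nonneg_right (hp e heE) (by positivity)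
      _ = x * (1 - x) ^ D * 2 ^ N * ((1 - x) ^ S₁.card * ((avoidSet A S₂).card : ℝ)) := by ring
      _ ≤ x * (1 - x) ^ D * 2 ^ N * ((avoidSet A S).card : ℝ) := by
          apply mul_le_mul_of_nonneg_left hpeel (by positivity)
      _ = (1 - x) ^ S₁.card * ((1 - x) ^ (D - S₁.card) * (x * 2 ^ N * ((avoidSet A S).card : ℝ))) := by
          conv_lhs => rw [show D = S₁.card + (D - S₁.card) from (Nat.add_sub_cancel' hS₁D).symm, pow_add]
          ring
      _ ≤ (1 - x) ^ S₁.card * (1 * (x * 2 ^ N * ((avoidSet A S).card : ℝ))) := by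
          apply mul_le_mul_of_nonneg_left _ (le_of_lt hc₁)
          apply mul_le_mul_of_nonneg_right _ (by positivity)
          exact pow_le_one₀ (le_of_lt hx0') (by linarith)
      _ = (1 - x) ^ S₁.card * 2 ^ N * (x * ((avoidSet A S).card : ℝ)) := by ring

/-- Counting version of the symmetric Lovász Local Lemma. -/
lemma lll_count
    (hdep : ∀ e, ∀ w w' : Fin N → Bool, (∀ i ∈ vbl e, w i = w' i) → w ∈ A e → w' ∈ A e)
    (hx0 : 0 < x) (hx1 : x < 1)
    (hp : ∀ e ∈ E, ((A e).card : ℝ) ≤ x * (1 - x) ^ D * 2 ^ N)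
    (hD : ∀ e ∈ E, (E.filter (fun f => ¬ Disjoint (vbl e) (vbl f))).card ≤ D) :
    (1 - x) ^ E.card * 2 ^ N ≤ ((avoidSet A E).card : ℝ) := by
  classical
  have hmain : ∀ T ⊆ E, T.card < E.card + 1 → ∀ e ∈ E,
      ((A e ∩ avoidSet A T).card : ℝ) ≤ x * (avoidSet A T).card :=
    fun T hTE _ e he => lll_main A vbl E D x hdep hx0 hx1 hp hD T.card T hTE le_rfl e he
  have hpeel := lll_peel A E x hx1 (E.card + 1) hmain E ∅ (by simp) (by simp) (by simp)
    E (Finset.Subset.refl _)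
  rw [Finset.union_empty] at hpeel
  have hempty : ((avoidSet A (∅ : Finset α)).card : ℝ) = 2 ^ N := by
    have : avoidSet A (∅ : Finset α) = univ := by
      ext w; simp [mem_avoidSet]
    rw [this, card_univ, Fintype.card_fun, Fintype.card_bool, Fintype.card_fin]
    push_cast; ring
  rw [hempty] at hpeel
  exact hpeel

end LLL


section App

/-- The bad event: windows at `e.1` and `e.2` of length `k` agree. -/
def evA (n k : ℕ) (e : ℕ × ℕ) : Finset (Fin n → Bool) :=
  univ.filter (fun w => ∀ t < k, extB n w (e.1 + t) = extB n w (e.2 + t))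

/-- Variables of the event. -/
def evV (n k : ℕ) (e : ℕ × ℕ) : Finset (Fin n) :=
  univ.filter (fun p => (e.1 ≤ p.val ∧ p.val < e.1 + k) ∨ (e.2 ≤ p.val ∧ p.val < e.2 + k))

/-- The index set of events. -/
def evE (n k : ℕ) : Finset (ℕ × ℕ) :=
  ((range n) ×ˢ (range n)).filter (fun e => e.1 < e.2 ∧ e.2 + k ≤ n)

lemma mem_evA {n k : ℕ} {e : ℕ × ℕ} {w : Fin n → Bool} :
    w ∈ evA n k e ↔ ∀ t < k, extB n w (e.1 + t) = extB n w (e.2 + t) := by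
  simp [evA]

lemma evA_dep (n k : ℕ) : ∀ e, ∀ w w' : Fin n → Bool,
    (∀ i ∈ evV n k e, w i = w' i) → w ∈ evA n k e → w' ∈ evA n k e := by
  intro e w w' hag hw
  rw [mem_evA] at *
  have key : ∀ q t : ℕ, (q = e.1 ∨ q = e.2) → t < k → extB n w (q + t) = extB n w' (q + t) := by
    intro q t hq ht
    unfold extB
    by_cases h : q + t < n
    · rw [dif_pos h, dif_pos h]
      apply hag
      simp only [evV, Finset.mem_filter, Finset.mem_univ, true_and]
      rcases hq with rfl | rfl
      · exact Or.inl ⟨Nat.le_add_right _ _, by omega⟩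
      · exact Or.inr ⟨Nat.le_add_right _ _, by omega⟩
    · rw [dif_neg h, dif_neg h]
  intro t ht
  rw [← key e.1 t (Or.inl rfl) ht, ← key e.2 t (Or.inr rfl) ht]
  exact hw t ht

lemma card_evA_le (n k : ℕ) (i j : ℕ) (hij : i < j) (hjk : j + k ≤ n) :
    (evA n k (i, j)).card ≤ 2 ^ (n - k) := by
  classical
  have hmem : ∀ m ∈ Finset.Ico j (j + k), m < n := by
    intro m hm; rw [Finset.mem_Ico] at hm; omega
  set J : Finset (Fin n) := (Finset.Ico j (j + k)).attachFin hmem with hJ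
  have hmemJ : ∀ p : Fin n, p ∈ J ↔ j ≤ p.val ∧ p.val < j + k := by
    intro p; rw [hJ, Finset.mem_attachFin, Finset.mem_Ico]
  have hJcard : J.card = k := by
    rw [hJ, Finset.card_attachFin, Nat.card_Ico]; omega
  -- restriction map
  set F : (Fin n → Bool) → ({p : Fin n // p ∉ J} → Bool) := fun w q => w q.val with hF
  have hinj : Set.InjOn F (evA n k (i, j) : Set (Fin n → Bool)) := by
    intro w hw w' hw' hFeq
    simp only [Finset.coe_filter, Set.mem_setOf_eq, Finset.mem_coe, mem_evA] at hw hw'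
    have hrest : ∀ p : Fin n, p ∉ J → w p = w' p := by
      intro p hp
      exact congrFun hFeq ⟨p, hp⟩
    have H : ∀ m : ℕ, ∀ hm : m < n, w ⟨m, hm⟩ = w' ⟨m, hm⟩ := by
      intro m
      induction m using Nat.strong_induction_on with
      | _ m ihm =>
        intro hm
        by_cases hpJ : (⟨m, hm⟩ : Fin n) ∈ J
        · have hran := (hmemJ _).1 hpJ
          simp only at hran
          set t := m - j with htdef
          have ht : t < k := by omega
          have hmt : m = j + t := by omega
          have hjn : j + t < n := by omega
          have hin : i + t < n := by omega
          have e1 : extB n w (j + t) = w ⟨m, hm⟩ := by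
            simp only [extB, dif_pos hjn]
            congr 1
            exact Fin.ext (show j + t = m by omega)
          have e1' : extB n w' (j + t) = w' ⟨m, hm⟩ := by
            simp only [extB, dif_pos hjn]
            congr 1
            exact Fin.ext (show j + t = m by omega)
          have e2 : extB n w (i + t) = w ⟨i + t, hin⟩ := by
            simp only [extB, dif_pos hin]
          have e2' : extB n w' (i + t) = w' ⟨i + t, hin⟩ := by
            simp only [extB, dif_pos hin]
          have hIH : w ⟨i + t, hin⟩ = w' ⟨i + t, hin⟩ := ihm (i + t) (by omega) hin
          have hw1 := hw t ht
          have hw2 := hw' t ht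
          rw [← e1, ← e1', ← hw1, ← hw2, e2, e2', hIH]
        · exact hrest _ hpJ
    funext p
    have := H p.val p.isLt
    simpa using this
  have hcomplcard : Fintype.card {p : Fin n // p ∉ J} = n - k := by
    rw [Fintype.card_subtype]
    have : (univ.filter (fun p : Fin n => p ∉ J)) = Jᶜ := by
      ext p; simp
    rw [this, Finset.card_compl, hJcard, Fintype.card_fin]
  calc (evA n k (i, j)).card
      ≤ (univ : Finset ({p : Fin n // p ∉ J} → Bool)).card :=
        Finset.card_le_card_of_injOn F (fun w _ => Finset.mem_univ _) hinj
    _ = 2 ^ (n - k) := by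
        rw [card_univ, Fintype.card_fun, Fintype.card_bool, hcomplcard]

lemma card_dep_le (n k : ℕ) (e : ℕ × ℕ) (he : e ∈ evE n k) :
    ((evE n k).filter (fun f => ¬ Disjoint (evV n k e) (evV n k f))).card ≤ 8 * k * n := by
  classical
  set T : Finset ℕ := Finset.Ico (e.1 + 1 - k) (e.1 + k) ∪ Finset.Ico (e.2 + 1 - k) (e.2 + k)
    with hT
  have hTcard : T.card ≤ 4 * k := by
    refine le_trans (Finset.card_union_le _ _) ?_
    rw [Nat.card_Ico, Nat.card_Ico]; omega
  have hsub : (evE n k).filter (fun f => ¬ Disjoint (evV n k e) (evV n k f)) ⊆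
      (T ×ˢ range n) ∪ (range n ×ˢ T) := by
    intro f hf
    rw [Finset.mem_filter] at hf
    obtain ⟨hfE, hnd⟩ := hf
    obtain ⟨p, hpe, hpf⟩ := Finset.not_disjoint_iff.1 hnd
    simp only [evV, Finset.mem_filter, Finset.mem_univ, true_and] at hpe hpf
    have hf1n : f.1 ∈ range n := by
      rw [evE, Finset.mem_filter, Finset.mem_product] at hfE
      exact hfE.1.1
    have hf2n : f.2 ∈ range n := by
      rw [evE, Finset.mem_filter, Finset.mem_product] at hfE
      exact hfE.1.2
    rcases hpf with hr | hr
    · -- f.1 close to e.1 or e.2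
      have : f.1 ∈ T := by
        rw [hT, Finset.mem_union, Finset.mem_Ico, Finset.mem_Ico]
        rcases hpe with hq | hq
        · exact Or.inl (by omega)
        · exact Or.inr (by omega)
      exact Finset.mem_union_left _ (Finset.mem_product.2 ⟨this, hf2n⟩)
    · have : f.2 ∈ T := by
        rw [hT, Finset.mem_union, Finset.mem_Ico, Finset.mem_Ico]
        rcases hpe with hq | hq
        · exact Or.inl (by omega)
        · exact Or.inr (by omega)
      exact Finset.mem_union_right _ (Finset.mem_product.2 ⟨hf1n, this⟩)
  calc ((evE n k).filter (fun f => ¬ Disjoint (evV n k e) (evV n k f))).card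
      ≤ ((T ×ˢ range n) ∪ (range n ×ˢ T)).card := Finset.card_le_card hsub
    _ ≤ (T ×ˢ range n).card + (range n ×ˢ T).card := Finset.card_union_le _ _
    _ ≤ 4 * k * n + n * (4 * k) := by
        rw [Finset.card_product, Finset.card_product, Finset.card_range]
        exact Nat.add_le_add (Nat.mul_le_mul_right _ hTcard) (Nat.mul_le_mul_left _ hTcard)
    _ ≤ 8 * k * n := by ring_nf; omega

lemma card_evE_le (n k : ℕ) : (evE n k).card ≤ n * n := by
  calc (evE n k).card ≤ ((range n) ×ˢ (range n)).card :=
        Finset.card_le_card (Finset.filter_subset _ _)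
    _ = n * n := by rw [Finset.card_product, Finset.card_range]

/-- Lower bound on the number of repeat-free words via LLL. -/
lemma avoid_lower (n k : ℕ) (x : ℝ) (hx : x = 2 * ((2:ℝ) ^ k)⁻¹) (hx1 : x < 1)
    (hhalf : (1:ℝ) / 2 ≤ (1 - x) ^ (8 * k * n)) :
    (1 - x) ^ (n * n) * 2 ^ n ≤ ((avoidSet (evA n k) (evE n k)).card : ℝ) := by
  have hx0 : 0 < x := by rw [hx]; positivity
  have h1x : (0:ℝ) ≤ 1 - x := by linarith
  have hp : ∀ e ∈ evE n k, ((evA n k e).card : ℝ) ≤ x * (1 - x) ^ (8 * k * n) * 2 ^ n := by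
    intro e he
    have heE := he
    rw [evE, Finset.mem_filter] at heE
    obtain ⟨-, hlt, hle⟩ := heE
    have hkn : k ≤ n := by omega
    have hcard : ((evA n k e).card : ℝ) ≤ 2 ^ (n - k) := by
      have := card_evA_le n k e.1 e.2 hlt hle
      exact_mod_cast this
    refine le_trans hcard ?_
    have h2k : (0:ℝ) < 2 ^ k := by positivity
    have h2n : (0:ℝ) ≤ (2:ℝ) ^ n := by positivity
    have hinv : (0:ℝ) ≤ ((2:ℝ) ^ k)⁻¹ := by positivity
    have hpow : (2:ℝ) ^ (n - k) * 2 ^ k = 2 ^ n := by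
      rw [← pow_add, Nat.sub_add_cancel hkn]
    have h1 : (2:ℝ) ^ (n - k) = ((2:ℝ) ^ k)⁻¹ * 2 ^ n := by
      rw [← hpow]; field_simp
    rw [h1, hx]
    have key : (0:ℝ) ≤ ((2:ℝ) ^ k)⁻¹ * 2 ^ n * (2 * (1 - x) ^ (8 * k * n) - 1) :=
      mul_nonneg (mul_nonneg hinv h2n) (by linarith)
    rw [hx] at key
    nlinarith [key]
  have hD := fun e he => card_dep_le n k e he
  have hll := lll_count (evA n k) (evV n k) (evE n k) (8 * k * n) x (evA_dep n k) hx0 hx1 hp hD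
  refine le_trans ?_ hll
  have h2n : (0:ℝ) ≤ (2:ℝ) ^ n := by positivity
  have hmono : (1 - x) ^ (n * n) ≤ (1 - x) ^ (evE n k).card :=
    pow_le_pow_of_le_one h1x (by linarith) (card_evE_le n k)
  nlinarith [hmono]

/-- The statement's subtype has the same cardinality as the avoid set. -/
lemma card_stmt_eq (n k : ℕ) (hk : 1 ≤ k) :
    Nat.card {w : Fin n → Bool //
      ∀ i j : ℕ, i < j → j + k ≤ n →
        ∃ t < k, extB n w (i + t) ≠ extB n w (j + t)} =
    (avoidSet (evA n k) (evE n k)).card := by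
  classical
  have hiff : ∀ w : Fin n → Bool,
      (∀ i j : ℕ, i < j → j + k ≤ n → ∃ t < k, extB n w (i + t) ≠ extB n w (j + t)) ↔
      w ∈ avoidSet (evA n k) (evE n k) := by
    intro w
    rw [mem_avoidSet]
    constructor
    · intro hP e he hwA
      rw [evE, Finset.mem_filter] at he
      obtain ⟨-, hlt, hle⟩ := he
      obtain ⟨t, ht, hne⟩ := hP e.1 e.2 hlt hle
      exact hne (mem_evA.1 hwA t ht)
    · intro hAv i j hij hjk
      have hmem : (i, j) ∈ evE n k := by
        rw [evE, Finset.mem_filter, Finset.mem_product]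
        exact ⟨⟨Finset.mem_range.2 (by omega), Finset.mem_range.2 (by omega)⟩, hij, hjk⟩
      have := hAv (i, j) hmem
      rw [mem_evA] at this
      push_neg at this
      exact this
  calc Nat.card {w : Fin n → Bool //
      ∀ i j : ℕ, i < j → j + k ≤ n → ∃ t < k, extB n w (i + t) ≠ extB n w (j + t)}
      = Nat.card {w : Fin n → Bool // w ∈ avoidSet (evA n k) (evE n k)} :=
        Nat.card_congr (Equiv.subtypeEquivRight hiff)
    _ = (avoidSet (evA n k) (evE n k)).card := Nat.card_eq_finsetCard _

end App


open Filter Real Topology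

/-- `2 ^ ⌊a logb 2 n⌋₊` is at least `n ^ a / 2`. -/
lemma key_inv (a : ℝ) (ha : 1 < a) (n : ℕ) (hn : 1 ≤ n) :
    (((2:ℝ) ^ (⌊a * Real.logb 2 (n:ℝ)⌋₊ : ℕ)))⁻¹ ≤ 2 * (n:ℝ) ^ (-a) := by
  set k : ℕ := ⌊a * Real.logb 2 (n:ℝ)⌋₊ with hk
  have hn0 : (0:ℝ) < n := by exact_mod_cast hn
  have hfl : a * Real.logb 2 (n:ℝ) < (k:ℝ) + 1 := Nat.lt_floor_add_one _
  have h1 : a * Real.logb 2 (n:ℝ) - 1 ≤ (k:ℝ) := by linarith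
  have h2 : (2:ℝ) ^ (a * Real.logb 2 (n:ℝ) - 1) ≤ (2:ℝ) ^ ((k:ℝ)) :=
    Real.rpow_le_rpow_of_exponent_le one_le_two h1
  have h3 : (2:ℝ) ^ (a * Real.logb 2 (n:ℝ)) = (n:ℝ) ^ a := by
    rw [mul_comm, Real.rpow_mul (by norm_num : (0:ℝ) ≤ 2),
      Real.rpow_logb (by norm_num) (by norm_num) hn0]
  have h4 : (2:ℝ) ^ ((k:ℝ)) = (2:ℝ) ^ k := Real.rpow_natCast 2 k
  have h5 : (n:ℝ) ^ a / 2 ≤ (2:ℝ) ^ k := by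
    rw [← h4, ← h3]
    calc (2:ℝ) ^ (a * Real.logb 2 (n:ℝ)) / 2
        = (2:ℝ) ^ (a * Real.logb 2 (n:ℝ) - 1) := by
          rw [Real.rpow_sub (by norm_num), Real.rpow_one]
      _ ≤ (2:ℝ) ^ ((k:ℝ)) := h2
  have hna : (0:ℝ) < (n:ℝ) ^ a := Real.rpow_pos_of_pos hn0 a
  have h6 : ((2:ℝ) ^ k)⁻¹ ≤ ((n:ℝ) ^ a / 2)⁻¹ := by
    apply inv_anti₀ (by positivity) h5
  rw [Real.rpow_neg hn0.le]
  calc ((2:ℝ) ^ k)⁻¹ ≤ ((n:ℝ) ^ a / 2)⁻¹ := h6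
    _ = 2 * ((n:ℝ) ^ a)⁻¹ := by field_simp
/-- The capacity of binary `k`-repeat-free sequences with `k = ⌊a log₂ n⌋` equals `1` for
every `a > 1`. -/
theorem stmt_7 (a : ℝ) (ha : 1 < a) :
    Filter.limsup (fun n : ℕ =>
      (1 / (n : ℝ)) * Real.logb 2
        (Nat.card {w : Fin n → Bool //
          ∀ i j : ℕ, i < j → j + ⌊a * Real.logb 2 n⌋₊ ≤ n →
            ∃ t < ⌊a * Real.logb 2 n⌋₊,
              extB n w (i + t) ≠ extB n w (j + t)})) Filter.atTop = 1 := by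
  classical
  have ha0 : 0 < a := lt_trans one_pos ha
  set K : ℕ → ℕ := fun n => ⌊a * Real.logb 2 (n:ℝ)⌋₊ with hKdef
  set C : ℕ → ℕ := fun n => Nat.card {w : Fin n → Bool //
    ∀ i j : ℕ, i < j → j + ⌊a * Real.logb 2 (n:ℝ)⌋₊ ≤ n →
      ∃ t < ⌊a * Real.logb 2 (n:ℝ)⌋₊, extB n w (i + t) ≠ extB n w (j + t)} with hCdef
  set F : ℕ → ℝ := fun n => (1 / (n:ℝ)) * Real.logb 2 (C n) with hFdef
  set X : ℕ → ℝ := fun n => 2 * ((2:ℝ) ^ (K n))⁻¹ with hXdef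
  set G : ℕ → ℝ := fun n => 1 + (n:ℝ) * Real.logb 2 (1 - X n) with hGdef
  show Filter.limsup F atTop = 1
  -- upper bound
  have hub : ∀ n : ℕ, F n ≤ 1 := by
    intro n
    rcases Nat.eq_zero_or_pos n with rfl | hn
    · simp [hFdef]
    · have hc2 : C n ≤ 2 ^ n := by
        have h := Nat.card_le_card_of_injective
          (Subtype.val (p := fun w : Fin n → Bool =>
            ∀ i j : ℕ, i < j → j + ⌊a * Real.logb 2 (n:ℝ)⌋₊ ≤ n →
              ∃ t < ⌊a * Real.logb 2 (n:ℝ)⌋₊, extB n w (i + t) ≠ extB n w (j + t)))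
          Subtype.val_injective
        rw [Nat.card_eq_fintype_card (α := Fin n → Bool), Fintype.card_fun,
          Fintype.card_bool, Fintype.card_fin] at h
        exact h
      rcases Nat.eq_zero_or_pos (C n) with hc0 | hcpos
      · simp only [hFdef, hc0, Nat.cast_zero, Real.logb_zero, mul_zero]
        norm_num
      · have hlog : Real.logb 2 ((C n : ℝ)) ≤ n := by
          have h1 : ((C n : ℝ)) ≤ (2:ℝ) ^ n := by exact_mod_cast hc2
          have h2 : Real.logb 2 ((C n : ℝ)) ≤ Real.logb 2 ((2:ℝ) ^ n) :=
            Real.logb_le_logb_of_le one_lt_two (by exact_mod_cast hcpos) h1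
          rwa [Real.logb_pow, Real.logb_self_eq_one one_lt_two, mul_one] at h2
        have hn0 : (0:ℝ) < n := by exact_mod_cast hn
        have : F n ≤ (1 / (n:ℝ)) * n := by
          apply mul_le_mul_of_nonneg_left hlog (by positivity)
        rwa [one_div_mul_cancel (ne_of_gt hn0)] at this
  -- K tends to infinity
  have hKtop : Tendsto K atTop atTop := by
    apply tendsto_nat_floor_atTop.comp
    exact Tendsto.const_mul_atTop ha0
      ((Real.tendsto_logb_atTop one_lt_two).comp tendsto_natCast_atTop_atTop)
  have hK3 : ∀ᶠ n : ℕ in atTop, 3 ≤ K n := hKtop.eventually_ge_atTop 3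
  -- log * rpow tendsto 0
  have hlittle : Tendsto (fun y : ℝ => Real.logb 2 y * y ^ (1 - a)) atTop (𝓝 0) := by
    have h1 : Tendsto (fun y : ℝ => Real.log y / y ^ (a - 1)) atTop (𝓝 0) :=
      (isLittleO_log_rpow_atTop (by linarith)).tendsto_div_nhds_zero
    have h2 := h1.const_mul (Real.log 2)⁻¹
    rw [mul_zero] at h2
    apply h2.congr'
    filter_upwards [eventually_gt_atTop (0:ℝ)] with y hy
    rw [Real.logb, show (1:ℝ) - a = -(a - 1) by ring, Real.rpow_neg hy.le]
    ring
  have hmul0 : Tendsto (fun n : ℕ => 32 * a * (Real.logb 2 (n:ℝ) * (n:ℝ) ^ (1 - a)))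
      atTop (𝓝 0) := by
    have h := (hlittle.const_mul (32 * a)).comp tendsto_natCast_atTop_atTop
    rw [mul_zero] at h
    exact h
  have hDx : ∀ᶠ n : ℕ in atTop,
      32 * a * (Real.logb 2 (n:ℝ) * (n:ℝ) ^ (1 - a)) ≤ 1/2 :=
    hmul0.eventually (eventually_le_nhds (show (0:ℝ) < 1/2 by norm_num))
  -- chain : D * x small
  have hchain : ∀ᶠ n : ℕ in atTop,
      16 * (K n : ℝ) * n * ((2:ℝ) ^ (K n))⁻¹ ≤ 1/2 := by
    filter_upwards [hDx, eventually_ge_atTop 1] with n h1 hn1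
    have hn0 : (0:ℝ) < n := by exact_mod_cast hn1
    have hinv : ((2:ℝ) ^ (K n))⁻¹ ≤ 2 * (n:ℝ) ^ (-a) := key_inv a ha n hn1
    have hlogn : 0 ≤ Real.logb 2 (n:ℝ) :=
      Real.logb_nonneg one_lt_two (by exact_mod_cast hn1)
    have hkle : (K n : ℝ) ≤ a * Real.logb 2 (n:ℝ) :=
      Nat.floor_le (mul_nonneg ha0.le hlogn)
    have hrw : (n:ℝ) ^ (1 - a) = n * (n:ℝ) ^ (-a) := by
      rw [show (1:ℝ) - a = 1 + (-a) by ring, Real.rpow_add hn0, Real.rpow_one]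
    have hr0 : (0:ℝ) ≤ (n:ℝ) ^ (-a) := Real.rpow_nonneg hn0.le _
    have hi0 : (0:ℝ) ≤ ((2:ℝ) ^ (K n))⁻¹ := by positivity
    have hk0 : (0:ℝ) ≤ (K n : ℝ) := Nat.cast_nonneg _
    have hkey : (K n : ℝ) * ((2:ℝ) ^ (K n))⁻¹ ≤
        (a * Real.logb 2 (n:ℝ)) * (2 * (n:ℝ) ^ (-a)) :=
      mul_le_mul hkle hinv hi0 (mul_nonneg ha0.le hlogn)
    have h2 : 16 * (K n : ℝ) * n * ((2:ℝ) ^ (K n))⁻¹ ≤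
        32 * a * (Real.logb 2 (n:ℝ) * (n:ℝ) ^ (1 - a)) := by
      rw [hrw]
      nlinarith [mul_le_mul_of_nonneg_left hkey (by positivity : (0:ℝ) ≤ 16 * (n:ℝ))]
    linarith
  -- lower bound on F, eventually
  have hlb : ∀ᶠ n : ℕ in atTop, G n ≤ F n := by
    filter_upwards [hK3, hchain, eventually_ge_atTop 1] with n h3 hch hn1
    have hn0 : (0:ℝ) < n := by exact_mod_cast hn1
    have hxval : X n = 2 * ((2:ℝ) ^ (K n))⁻¹ := rfl
    have h2k : (8:ℝ) ≤ 2 ^ (K n) := by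
      calc (8:ℝ) = 2 ^ 3 := by norm_num
        _ ≤ 2 ^ (K n) := pow_le_pow_right₀ one_le_two h3
    have hx14 : X n ≤ 1/4 := by
      rw [hxval]
      have h8 : ((2:ℝ) ^ (K n))⁻¹ ≤ 8⁻¹ := inv_anti₀ (by norm_num) h2k
      linarith
    have hx1 : X n < 1 := lt_of_le_of_lt hx14 (by norm_num)
    have hx0 : 0 < X n := by rw [hxval]; positivity
    have hhalf : (1:ℝ)/2 ≤ (1 - X n) ^ (8 * (K n) * n) := by
      have hbern := one_add_mul_le_pow (a := -(X n)) (by linarith) (8 * (K n) * n)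
      have hDxeq : ((8 * (K n) * n : ℕ) : ℝ) * (X n)
          = 16 * (K n : ℝ) * n * ((2:ℝ) ^ (K n))⁻¹ := by
        push_cast
        rw [hxval]; ring
      have hsm : ((8 * (K n) * n : ℕ) : ℝ) * (X n) ≤ 1/2 := by rw [hDxeq]; exact hch
      have : 1 + ((8 * (K n) * n : ℕ) : ℝ) * (-(X n)) ≤ (1 + -(X n)) ^ (8 * (K n) * n) :=
        hbern
      rw [show (1:ℝ) + -(X n) = 1 - X n by ring] at this
      nlinarith [this, hsm]
    have hlow := avoid_lower n (K n) (X n) hxval hx1 hhalf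
    have hcardeq : C n = (avoidSet (evA n (K n)) (evE n (K n))).card :=
      card_stmt_eq n (K n) (by omega)
    set Av := (avoidSet (evA n (K n)) (evE n (K n))).card with hAv
    have h1x : (0:ℝ) < 1 - X n := by linarith
    have hposlow : (0:ℝ) < (1 - X n) ^ (n * n) * 2 ^ n :=
      mul_pos (pow_pos h1x _) (pow_pos two_pos n)
    have hposav : (0:ℝ) < (Av : ℝ) := lt_of_lt_of_le hposlow hlow
    have hlogav : (n * n : ℝ) * Real.logb 2 (1 - X n) + n ≤ Real.logb 2 (Av : ℝ) := by
      have hmono : Real.logb 2 ((1 - X n) ^ (n * n) * 2 ^ n) ≤ Real.logb 2 (Av : ℝ) :=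
        Real.logb_le_logb_of_le one_lt_two hposlow hlow
      rw [Real.logb_mul (ne_of_gt (pow_pos h1x _)) (ne_of_gt (pow_pos two_pos n)),
        Real.logb_pow, Real.logb_pow,
        Real.logb_self_eq_one one_lt_two, mul_one] at hmono
      calc (n * n : ℝ) * Real.logb 2 (1 - X n) + n
          = ((n * n : ℕ) : ℝ) * Real.logb 2 (1 - X n) + n := by push_cast; ring
        _ ≤ Real.logb 2 (Av : ℝ) := hmono
    have hFn : F n = (1 / (n:ℝ)) * Real.logb 2 (Av : ℝ) := by
      rw [hFdef]
      simp only [hcardeq]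
    rw [hFn, hGdef]
    have hmul : (1 / (n:ℝ)) * ((n * n : ℝ) * Real.logb 2 (1 - X n) + n)
        ≤ (1 / (n:ℝ)) * Real.logb 2 (Av : ℝ) :=
      mul_le_mul_of_nonneg_left hlogav (by positivity)
    have hiden : (1 / (n:ℝ)) * ((n * n : ℝ) * Real.logb 2 (1 - X n) + n)
        = 1 + (n:ℝ) * Real.logb 2 (1 - X n) := by
      field_simp
      ring
    linarith [hmul, hiden.symm.le]
  -- G tends to 1
  have hXbound : ∀ᶠ n : ℕ in atTop,
      -16 * (n:ℝ) ^ (1 - a) ≤ (n:ℝ) * Real.logb 2 (1 - X n) ∧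
      (n:ℝ) * Real.logb 2 (1 - X n) ≤ 0 := by
    filter_upwards [hK3, eventually_ge_atTop 1] with n h3 hn1
    have hn0 : (0:ℝ) < n := by exact_mod_cast hn1
    have hxval : X n = 2 * ((2:ℝ) ^ (K n))⁻¹ := rfl
    have h2k : (8:ℝ) ≤ 2 ^ (K n) := by
      calc (8:ℝ) = 2 ^ 3 := by norm_num
        _ ≤ 2 ^ (K n) := pow_le_pow_right₀ one_le_two h3
    have hx14 : X n ≤ 1/4 := by
      rw [hxval]
      have h8 : ((2:ℝ) ^ (K n))⁻¹ ≤ 8⁻¹ := inv_anti₀ (by norm_num) h2k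
      linarith
    have hx0 : 0 < X n := by rw [hxval]; positivity
    have h1x : (0:ℝ) < 1 - X n := by linarith
    have hinv : ((2:ℝ) ^ (K n))⁻¹ ≤ 2 * (n:ℝ) ^ (-a) := key_inv a ha n hn1
    have hxle : X n ≤ 4 * (n:ℝ) ^ (-a) := by rw [hxval]; linarith
    have hlog2 : (1:ℝ)/2 < Real.log 2 := by
      have := Real.log_two_gt_d9; linarith
    -- log (1 - x) ≥ -2x
    have hl1 : -(2 * X n) ≤ Real.log (1 - X n) := by
      have hipos : (0:ℝ) < (1 - X n)⁻¹ := by positivity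
      have h := Real.log_le_sub_one_of_pos hipos
      rw [Real.log_inv] at h
      have hmul : 1 ≤ (1 + 2 * X n) * (1 - X n) := by nlinarith
      have hinvle : (1 - X n)⁻¹ ≤ 1 + 2 * X n := by
        calc (1 - X n)⁻¹ = 1 * (1 - X n)⁻¹ := by ring
          _ ≤ ((1 + 2 * X n) * (1 - X n)) * (1 - X n)⁻¹ :=
            mul_le_mul_of_nonneg_right hmul hipos.le
          _ = 1 + 2 * X n := by field_simp
      have h2 : (1 - X n)⁻¹ - 1 ≤ 2 * X n := by linarith
      linarith
    have hlogb : -(4 * X n) ≤ Real.logb 2 (1 - X n) := by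
      rw [Real.logb, le_div_iff₀ (by linarith : (0:ℝ) < Real.log 2)]
      nlinarith [hx0.le, hlog2, hl1]
    have hlogb0 : Real.logb 2 (1 - X n) ≤ 0 :=
      Real.logb_nonpos one_lt_two h1x.le (by linarith)
    constructor
    · have hrw : (n:ℝ) ^ (1 - a) = n * (n:ℝ) ^ (-a) := by
        rw [show (1:ℝ) - a = 1 + (-a) by ring, Real.rpow_add hn0, Real.rpow_one]
      have : -(4 * X n) * n ≤ Real.logb 2 (1 - X n) * n :=
        mul_le_mul_of_nonneg_right hlogb hn0.le
      have hr0 : (0:ℝ) ≤ (n:ℝ) ^ (-a) := Real.rpow_nonneg hn0.le _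
      rw [hrw]
      nlinarith [this, hxle, hr0]
    · exact mul_nonpos_of_nonneg_of_nonpos hn0.le hlogb0
  have hlow0 : Tendsto (fun n : ℕ => -16 * (n:ℝ) ^ (1 - a)) atTop (𝓝 0) := by
    have h1 : Tendsto (fun y : ℝ => y ^ (-(a - 1))) atTop (𝓝 0) :=
      tendsto_rpow_neg_atTop (by linarith)
    have h2 := (h1.const_mul (-16)).comp tendsto_natCast_atTop_atTop
    rw [mul_zero] at h2
    have : (fun n : ℕ => -16 * (n:ℝ) ^ (1 - a))
        = (fun y : ℝ => -16 * y ^ (-(a - 1))) ∘ Nat.cast := by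
      funext n
      simp only [Function.comp_apply]
      rw [show (1:ℝ) - a = -(a - 1) by ring]
    rw [this]
    exact h2
  have hmid : Tendsto (fun n : ℕ => (n:ℝ) * Real.logb 2 (1 - X n)) atTop (𝓝 0) :=
    tendsto_of_tendsto_of_tendsto_of_le_of_le' hlow0 tendsto_const_nhds
      (hXbound.mono fun n h => h.1) (hXbound.mono fun n h => h.2)
  have hg : Tendsto G atTop (𝓝 1) := by
    have := hmid.const_add 1
    rw [add_zero] at this
    exact this
  -- limsup conclusion
  have hFub : ∀ᶠ n in atTop, F n ≤ 1 := Eventually.of_forall hub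
  have hgl : ∀ᶠ n in atTop, (1:ℝ)/2 ≤ G n :=
    hg.eventually (eventually_ge_nhds (show (1:ℝ)/2 < 1 by norm_num))
  have hFge : ∀ᶠ n in atTop, (1:ℝ)/2 ≤ F n := by
    filter_upwards [hlb, hgl] with n h1 h2
    exact le_trans h2 h1
  have hFcob : IsCoboundedUnder (· ≤ ·) atTop F :=
    isCoboundedUnder_le_of_eventually_le atTop hFge
  have hgcob : IsCoboundedUnder (· ≤ ·) atTop G :=
    isCoboundedUnder_le_of_eventually_le atTop hgl
  have hFbdd : IsBoundedUnder (· ≤ ·) atTop F :=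
    Filter.isBoundedUnder_of_eventually_le hFub
  apply le_antisymm
  · exact Filter.limsup_le_of_le hFcob hFub
  · calc (1:ℝ) = Filter.limsup G atTop := (hg.limsup_eq).symm
      _ ≤ Filter.limsup F atTop := Filter.limsup_le_limsup hlb hgcob hFbdd
end

section
/- (Asymmetric Lovász Local Lemma) Let A_0,…,A_{m-1} be events in a probability space and G = ([m], E) a graph such that each A_i is mutually independent of the collection {A_j : (i,j) ∉ E, j ≠ i}. If there exist x_0,…,x_{m-1} ∈ [0,1) with Pr(A_i) ≤ x_i ∏_{(i,j)∈E} (1 - x_j) for all i, then Pr(⋂_i complement(A_i)) ≥ ∏_i (1 - x_i) > 0. -/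
open MeasureTheory

namespace LLLaux

variable {Ω : Type*} [MeasurableSpace Ω] (μ : Measure Ω) [IsProbabilityMeasure μ]
  {m : ℕ}

/-- Intersection of the complements of the events indexed by `S`. -/
def C (A : Fin m → Set Ω) (S : Finset (Fin m)) : Set Ω := ⋂ j ∈ S, (A j)ᶜ

variable (A : Fin m → Set Ω) (x : Fin m → ℝ)

lemma peel (hA : ∀ i, MeasurableSet (A i)) (hx0 : ∀ j, 0 ≤ x j) (j : Fin m) (D : Set Ω)
    (hkey : μ (A j ∩ D) ≤ ENNReal.ofReal (x j) * μ D) :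
    ENNReal.ofReal (1 - x j) * μ D ≤ μ ((A j)ᶜ ∩ D) := by
  have h0 : μ (D ∩ A j) + μ (D \ A j) = μ D := measure_inter_add_diff D (hA j)
  calc ENNReal.ofReal (1 - x j) * μ D
      = (1 - ENNReal.ofReal (x j)) * μ D := by
        rw [ENNReal.ofReal_sub _ (hx0 j), ENNReal.ofReal_one]
    _ = μ D - ENNReal.ofReal (x j) * μ D := by
        rw [ENNReal.sub_mul (fun _ _ => measure_ne_top μ D), one_mul]
    _ ≤ μ D - μ (A j ∩ D) := tsub_le_tsub_left hkey _
    _ ≤ μ (D \ A j) := by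
        rw [tsub_le_iff_right, Set.inter_comm, ← h0]
        exact le_of_eq (add_comm _ _)
    _ = μ ((A j)ᶜ ∩ D) := by rw [Set.diff_eq, Set.inter_comm]

lemma prodle (hA : ∀ i, MeasurableSet (A i)) (hx0 : ∀ j, 0 ≤ x j) (hxle : ∀ j, x j ≤ 1) :
    ∀ (T U : Finset (Fin m)), Disjoint T U →
    (∀ j ∈ T, ∀ V : Finset (Fin m), V ⊆ (T ∪ U).erase j →
      μ (A j ∩ C A V) ≤ ENNReal.ofReal (x j) * μ (C A V)) →
    ENNReal.ofReal (∏ j ∈ T, (1 - x j)) * μ (C A U) ≤ μ (C A (T ∪ U)) := by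
  classical
  intro T
  induction T using Finset.induction_on with
  | empty =>
      intro U _ _
      simp
  | @insert a T' ha ih =>
      intro U hd hrec
      have haU : a ∉ U := fun h => (Finset.disjoint_left.mp hd (Finset.mem_insert_self a T')) h
      have haTU : a ∉ T' ∪ U := by simp [ha, haU]
      have hd' : Disjoint T' U := hd.mono_left (Finset.subset_insert a T')
      have hrec' : ∀ j ∈ T', ∀ V : Finset (Fin m), V ⊆ (T' ∪ U).erase j →
          μ (A j ∩ C A V) ≤ ENNReal.ofReal (x j) * μ (C A V) := by
        intro j hj V hV
        refine hrec j (Finset.mem_insert_of_mem hj) V (hV.trans ?_)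
        exact Finset.erase_subset_erase _ (Finset.union_subset_union_left (Finset.subset_insert a T'))
      have hIH := ih U hd' hrec'
      have hkey : μ (A a ∩ C A (T' ∪ U)) ≤ ENNReal.ofReal (x a) * μ (C A (T' ∪ U)) := by
        refine hrec a (Finset.mem_insert_self a T') (T' ∪ U) ?_
        rw [Finset.subset_erase]
        exact ⟨Finset.union_subset_union_left (Finset.subset_insert a T'), haTU⟩
      have hpeel := peel μ A x hA hx0 a (C A (T' ∪ U)) hkey
      have hCins : C A (insert a T' ∪ U) = (A a)ᶜ ∩ C A (T' ∪ U) := by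
        rw [Finset.insert_union]
        simp [C, Set.biInter_insert]
      calc ENNReal.ofReal (∏ j ∈ insert a T', (1 - x j)) * μ (C A U)
          = ENNReal.ofReal ((1 - x a) * ∏ j ∈ T', (1 - x j)) * μ (C A U) := by
            rw [Finset.prod_insert ha]
        _ = ENNReal.ofReal (1 - x a) * (ENNReal.ofReal (∏ j ∈ T', (1 - x j)) * μ (C A U)) := by
            rw [ENNReal.ofReal_mul (by linarith [hxle a] : (0:ℝ) ≤ 1 - x a), mul_assoc]
        _ ≤ ENNReal.ofReal (1 - x a) * μ (C A (T' ∪ U)) := mul_le_mul_right hIH _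
        _ ≤ μ ((A a)ᶜ ∩ C A (T' ∪ U)) := hpeel
        _ = μ (C A (insert a T' ∪ U)) := by rw [hCins]

end LLLaux

/-- The asymmetric Lovász local lemma: if each event `A i` is mutually independent of all the
events `A j` with `j` not adjacent to `i` in the dependency graph `E`, and
`P(A i) ≤ x i * ∏_{(i,j) ∈ E} (1 - x j)` with `x i ∈ [0,1)`, then
`P(⋂ᵢ Aᵢᶜ) ≥ ∏ᵢ (1 - x i) > 0`. -/
theorem stmt_8 {Ω : Type*} [MeasurableSpace Ω] (μ : Measure Ω) [IsProbabilityMeasure μ]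
    (m : ℕ) (A : Fin m → Set Ω) (hA : ∀ i, MeasurableSet (A i))
    (E : Fin m → Fin m → Prop) [∀ i j, Decidable (E i j)]
    (hIndep : ∀ i, ∀ B : Set Ω,
      MeasurableSet[MeasurableSpace.generateFrom {S | ∃ j, ¬ E i j ∧ j ≠ i ∧ S = A j}] B →
      μ (A i ∩ B) = μ (A i) * μ B)
    (x : Fin m → ℝ) (hx0 : ∀ i, 0 ≤ x i) (hx1 : ∀ i, x i < 1)
    (hbound : ∀ i, μ (A i) ≤ ENNReal.ofReal
      (x i * ∏ j ∈ Finset.univ.filter (fun j => E i j), (1 - x j))) :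
    ENNReal.ofReal (∏ i, (1 - x i)) ≤ μ (⋂ i, (A i)ᶜ) ∧ 0 < ∏ i, (1 - x i) := by
  classical
  set C := LLLaux.C A with hCdef
  have hx1' : ∀ j, 0 ≤ 1 - x j := fun j => by linarith [hx1 j]
  -- the core step
  have key : ∀ (S : Finset (Fin m)) (i : Fin m), i ∉ S →
      (∀ j ∈ S, ∀ V : Finset (Fin m), V ⊆ S.erase j →
        μ (A j ∩ C V) ≤ ENNReal.ofReal (x j) * μ (C V)) →
      μ (A i ∩ C S) ≤ ENNReal.ofReal (x i) * μ (C S) := by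
    intro S i hi hrec
    set S1 := S.filter (fun j => E i j) with hS1
    set S2 := S.filter (fun j => ¬ E i j) with hS2
    have hUnion : S1 ∪ S2 = S := Finset.filter_union_filter_not_eq _ S
    have hdisj : Disjoint S1 S2 := Finset.disjoint_filter_filter_not S S _
    have hmeas : MeasurableSet[MeasurableSpace.generateFrom
        {T | ∃ j, ¬ E i j ∧ j ≠ i ∧ T = A j}] (C S2) := by
      apply MeasurableSet.biInter (S2.countable_toSet)
      intro j hj
      have hj' : j ∈ S ∧ ¬ E i j := by
        simpa [hS2, Finset.mem_filter] using hj
      have hmem : A j ∈ {T : Set Ω | ∃ j', ¬ E i j' ∧ j' ≠ i ∧ T = A j'} :=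
        ⟨j, hj'.2, fun h => hi (h ▸ hj'.1), rfl⟩
      exact (MeasurableSpace.measurableSet_generateFrom hmem).compl
    have hind : μ (A i ∩ C S2) = μ (A i) * μ (C S2) := hIndep i _ hmeas
    have hsub : C S ⊆ C S2 := by
      apply Set.biInter_subset_biInter_left
      intro j hj
      exact Finset.filter_subset _ _ hj
    have h1 : μ (A i ∩ C S) ≤ μ (A i) * μ (C S2) := by
      rw [← hind]
      exact measure_mono (Set.inter_subset_inter_right _ hsub)
    have hsub1 : S1 ⊆ Finset.univ.filter (fun j => E i j) := by
      intro j hj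
      simp only [hS1, Finset.mem_filter] at hj ⊢
      exact ⟨Finset.mem_univ j, hj.2⟩
    have hxprod : x i * ∏ j ∈ Finset.univ.filter (fun j => E i j), (1 - x j)
        ≤ x i * ∏ j ∈ S1, (1 - x j) := by
      apply mul_le_mul_of_nonneg_left _ (hx0 i)
      calc ∏ j ∈ Finset.univ.filter (fun j => E i j), (1 - x j)
          = (∏ j ∈ Finset.univ.filter (fun j => E i j) \ S1, (1 - x j)) *
            ∏ j ∈ S1, (1 - x j) := (Finset.prod_sdiff hsub1).symm
        _ ≤ 1 * ∏ j ∈ S1, (1 - x j) := by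
            apply mul_le_mul_of_nonneg_right _ (Finset.prod_nonneg fun j _ => hx1' j)
            exact Finset.prod_le_one (fun j _ => hx1' j) (fun j _ => by linarith [hx0 j])
        _ = ∏ j ∈ S1, (1 - x j) := one_mul _
    have h2 : μ (A i) ≤ ENNReal.ofReal (x i * ∏ j ∈ S1, (1 - x j)) :=
      (hbound i).trans (ENNReal.ofReal_le_ofReal hxprod)
    have hM : ENNReal.ofReal (∏ j ∈ S1, (1 - x j)) * μ (C S2) ≤ μ (C S) := by
      have := LLLaux.prodle μ A x hA hx0 (fun j => le_of_lt (hx1 j)) S1 S2 hdisj (fun j hj V hV => by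
        refine hrec j (Finset.filter_subset _ _ hj) V ?_
        rwa [hUnion] at hV)
      rwa [hUnion] at this
    calc μ (A i ∩ C S) ≤ μ (A i) * μ (C S2) := h1
      _ ≤ ENNReal.ofReal (x i * ∏ j ∈ S1, (1 - x j)) * μ (C S2) := mul_le_mul_left h2 _
      _ = ENNReal.ofReal (x i) * (ENNReal.ofReal (∏ j ∈ S1, (1 - x j)) * μ (C S2)) := by
          rw [ENNReal.ofReal_mul (hx0 i), mul_assoc]
      _ ≤ ENNReal.ofReal (x i) * μ (C S) := mul_le_mul_right hM _
  -- the full local lemma bound, by strong induction on card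
  have L : ∀ (n : ℕ) (S : Finset (Fin m)), S.card ≤ n → ∀ i ∉ S,
      μ (A i ∩ C S) ≤ ENNReal.ofReal (x i) * μ (C S) := by
    intro n
    induction n with
    | zero =>
        intro S hS i hi
        have hSe : S = ∅ := Finset.card_eq_zero.mp (Nat.le_antisymm hS (Nat.zero_le _))
        subst hSe
        exact key ∅ i hi (fun j hj => absurd hj (Finset.notMem_empty j))
    | succ n ih =>
        intro S hS i hi
        refine key S i hi (fun j hj V hV => ?_)
        have hjV : j ∉ V := fun h => Finset.notMem_erase j S (hV h)
        have hcard : V.card ≤ n := by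
          calc V.card ≤ (S.erase j).card := Finset.card_le_card hV
            _ = S.card - 1 := Finset.card_erase_of_mem hj
            _ ≤ n := by omega
        exact ih V hcard j hjV
  -- conclude
  have hppos : 0 < ∏ i, (1 - x i) := Finset.prod_pos fun i _ => by linarith [hx1 i]
  refine ⟨?_, hppos⟩
  have hfin := LLLaux.prodle μ A x hA hx0 (fun j => le_of_lt (hx1 j)) Finset.univ ∅ (Finset.disjoint_empty_right _)
    (fun j _ V hV => L V.card V le_rfl j (fun h => Finset.notMem_erase j _ (hV h)))
  have hCuniv : LLLaux.C A (Finset.univ : Finset (Fin m)) = ⋂ i, (A i)ᶜ := by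
    simp [LLLaux.C]
  have hCempty : LLLaux.C A (∅ : Finset (Fin m)) = Set.univ := by simp [LLLaux.C]
  rw [Finset.union_empty, hCempty, measure_univ, mul_one, hCuniv] at hfin
  exact hfin
end

section
/- Let w be a word ending with the block 1∘0^{ℓ+1} (a one followed by ℓ+1 zeros), where all other windows of length ℓ+1 in the prefix w_{[|w|-1]} are not all-zero. If (i, j) with i < j are starting positions of two identical windows of length k = 2ℓ + 2 in w, then i ≤ |w| - 3ℓ - 2; in particular, no removal of the window starting at position i can delete any of the last ℓ+1 symbols of w. -/
/-- Let `w` (of length `m`) end with the block `1 ∘ 0^{ℓ+1}`, while every other length-`(ℓ+1)`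
window of the prefix `w_{[m-1]}` is not all-zero. If `(i, j)` with `i < j` are starting
positions of identical windows of length `k = 2ℓ + 2`, then `i ≤ m - 3ℓ - 2`. -/
theorem stmt_9 (ℓ m : ℕ) (w : ℕ → Bool) (hm : 3 * ℓ + 3 ≤ m)
    (hone : w (m - ℓ - 2) = true)
    (hzero : ∀ t, m - ℓ - 1 ≤ t → t < m → w t = false)
    (hconstrained : ∀ i, i + (ℓ + 1) ≤ m - 1 → ∃ t ≤ ℓ, w (i + t) = true)
    (i j : ℕ) (hij : i < j) (hjk : j + (2 * ℓ + 2) ≤ m)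
    (hident : ∀ t < 2 * ℓ + 2, w (i + t) = w (j + t)) :
    i ≤ m - 3 * ℓ - 2 := by
  by_contra h
  push_neg at h
  have h1 := hident (m - ℓ - 2 - i) (by omega)
  have e1 : i + (m - ℓ - 2 - i) = m - ℓ - 2 := by omega
  rw [e1, hone] at h1
  have h2 := hzero (j + (m - ℓ - 2 - i)) (by omega) (by omega)
  rw [h2] at h1
  simp at h1
end

section
/- Under the entropy-maximizing stationary Markov chain on a deterministic strongly connected presentation with Perron eigenvalue λ, the probability that the length-k windows of the output starting at positions 0 and i are identical is at most |V| d² / λ^k, for every i ≥ 1, where d = max_{u,v} ν_u/ν_v. -/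
/-- Follow the labels of a word through a deterministic labeled graph. -/
def follow {V α : Type*} (step : V → α → Option V) : V → List α → Option V
  | v, [] => some v
  | v, a :: rest =>
    match step v a with
    | some u => follow step u rest
    | none => none

/-- The probability that the output of the entropy-maximizing stationary Markov chain begins
with the word `l`. -/
noncomputable def wordProb {V α : Type*} [Fintype V] (step : V → α → Option V)
    (nu eta : V → ℝ) (lam : ℝ) (l : List α) : ℝ :=
  ∑ s : V, (eta s * nu s) *
    (match follow step s l with
      | some t => nu t / (nu s * lam ^ l.length)
      | none => 0)

/-- Extension of `w : Fin m → α` to `ℕ` by a default value. -/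
def extA {α : Type*} [Inhabited α] (m : ℕ) (w : Fin m → α) : ℕ → α :=
  fun j => if h : j < m then w ⟨j, h⟩ else default

lemma follow_append {V α : Type*} (step : V → α → Option V) (v : V) (l1 l2 : List α) :
    follow step v (l1 ++ l2) = (follow step v l1).bind (fun t => follow step t l2) := by
  induction l1 generalizing v with
  | nil => rfl
  | cons a l ih =>
    show (match step v a with
      | some u => follow step u (l ++ l2)
      | none => none) =
      (match step v a with
      | some u => follow step u l
      | none => none).bind (fun t => follow step t l2)
    cases step v a with
    | none => rfl
    | some u => exact ih u

/-- auxiliary: value of `nu` at the endpoint, or 0. -/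
noncomputable def Fend {V α : Type*} (step : V → α → Option V) (nu : V → ℝ) (v : V)
    (l : List α) : ℝ :=
  match follow step v l with
  | some t => nu t
  | none => 0

lemma Fend_cons {V α : Type*} (step : V → α → Option V) (nu : V → ℝ) (v : V) (a : α)
    (l : List α) :
    Fend step nu v (a :: l) =
      (match step v a with | some u => Fend step nu u l | none => (0 : ℝ)) := by
  unfold Fend
  show (match (match step v a with
    | some u => follow step u l
    | none => none) with | some t => nu t | none => 0) = _
  cases step v a <;> rfl

lemma followSum {V α : Type*} [Fintype α] (step : V → α → Option V) (nu : V → ℝ) (lam : ℝ)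
    (heig : ∀ u : V, (∑ a : α, (match step u a with
        | some v => nu v
        | none => 0)) = lam * nu u) :
    ∀ (n : ℕ) (v : V), ∑ w : Fin n → α, Fend step nu v (List.ofFn w) = lam ^ n * nu v := by
  intro n
  induction n with
  | zero =>
    intro v
    simp [Fend, follow]
  | succ n ih =>
    intro v
    rw [Fintype.sum_equiv ((Fin.consEquiv (fun _ : Fin (n + 1) => α)).symm)
      (fun w => Fend step nu v (List.ofFn w))
      (fun p => Fend step nu v (p.1 :: List.ofFn p.2))
      (fun w => by
        show Fend step nu v (List.ofFn w) = Fend step nu v (w 0 :: List.ofFn (Fin.tail w))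
        rw [List.ofFn_succ]
        rfl)]
    rw [Fintype.sum_prod_type]
    have key : ∀ a : α, (∑ w : Fin n → α, Fend step nu v (a :: List.ofFn w)) =
        (match step v a with | some u => lam ^ n * nu u | none => (0 : ℝ)) := by
      intro a
      cases h : step v a with
      | none =>
        simp only
        apply Finset.sum_eq_zero
        intro w _
        rw [Fend_cons, h]
      | some u =>
        simp only
        rw [← ih u]
        apply Finset.sum_congr rfl
        intro w _
        rw [Fend_cons, h]
    calc ∑ a : α, ∑ w : Fin n → α, Fend step nu v (a :: List.ofFn w)
        = ∑ a : α, (match step v a with | some u => lam ^ n * nu u | none => (0 : ℝ)) :=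
          Finset.sum_congr rfl fun a _ => key a
      _ = lam ^ n * ∑ a : α, (match step v a with | some u => nu u | none => (0 : ℝ)) := by
          rw [Finset.mul_sum]
          apply Finset.sum_congr rfl
          intro a _
          cases step v a <;> simp
      _ = lam ^ (n + 1) * nu v := by rw [heig v]; ring

lemma wordProb_sum {V α : Type*} [Fintype V] [Fintype α] (step : V → α → Option V)
    (nu eta : V → ℝ) (lam : ℝ) (hlam : 0 < lam) (hnu : ∀ v, 0 < nu v)
    (hnorm : ∑ v, eta v * nu v = 1)
    (heig : ∀ u : V, (∑ a : α, (match step u a with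
        | some v => nu v
        | none => 0)) = lam * nu u) (n : ℕ) :
    ∑ w : Fin n → α, wordProb step nu eta lam (List.ofFn w) = 1 := by
  have : ∀ w : Fin n → α, wordProb step nu eta lam (List.ofFn w) =
      ∑ s : V, (eta s * nu s) * (Fend step nu s (List.ofFn w) / (nu s * lam ^ n)) := by
    intro w
    apply Finset.sum_congr rfl
    intro s _
    congr 1
    rw [List.length_ofFn]
    unfold Fend
    cases follow step s (List.ofFn w) <;> simp
  simp_rw [this]
  rw [Finset.sum_comm]
  rw [← hnorm]
  apply Finset.sum_congr rfl
  intro s _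
  rw [← Finset.mul_sum, ← Finset.sum_div, followSum step nu lam heig n s]
  have h1 : lam ^ n * nu s / (nu s * lam ^ n) = 1 := by
    rw [mul_comm]
    exact div_self (mul_pos (hnu s) (pow_pos hlam n)).ne'
  rw [h1, mul_one]

/-- Under the entropy-maximizing stationary Markov chain on a deterministic strongly connected
presentation with Perron eigenvalue `λ` (right eigenvector `ν > 0`, `∑ η v ν v = 1`), the
probability that the length-`k` windows of the output starting at positions `0` and `i ≥ 1`
coincide is at most `|V| d² / λ^k`, where `d = max ν_u / ν_v`. -/
theorem stmt_15 {V α : Type*} [Fintype V] [Fintype α] [DecidableEq α] [Inhabited α]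
    (step : V → α → Option V) (nu eta : V → ℝ) (lam : ℝ) (hlam : 0 < lam)
    (hnu : ∀ v, 0 < nu v) (heta : ∀ v, 0 < eta v)
    (hnorm : ∑ v, eta v * nu v = 1)
    (heig : ∀ u : V, (∑ a : α, (match step u a with
        | some v => nu v
        | none => 0)) = lam * nu u)
    (d : ℝ) (hd : ∀ u u', nu u / nu u' ≤ d)
    (k i : ℕ) (hi : 1 ≤ i) :
    ∑ w : Fin (i + k) → α,
      (if ∀ t < k, extA (i + k) w t = extA (i + k) w (i + t) then
        wordProb step nu eta lam (List.ofFn w) else 0)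
      ≤ (Fintype.card V : ℝ) * d ^ 2 / lam ^ k := by
  have hV : Nonempty V := by
    by_contra h
    rw [not_nonempty_iff] at h
    rw [Finset.sum_eq_zero (fun v _ => (h.false v).elim)] at hnorm
    norm_num at hnorm
  have v0 : V := hV.some
  have hd1 : 1 ≤ d := by
    have := hd v0 v0
    rwa [div_self (hnu v0).ne'] at this
  have hd0 : 0 < d := lt_of_lt_of_le one_pos hd1
  have hipos : 0 < i := hi
  -- the extension map
  set ext : (Fin i → α) → (Fin (i + k) → α) :=
    fun u j => u ⟨j % i, Nat.mod_lt _ hipos⟩ with hext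
  -- periodicity of words satisfying the condition
  have key : ∀ w : Fin (i + k) → α,
      (∀ t < k, extA (i + k) w t = extA (i + k) w (i + t)) →
      ∀ j : ℕ, ∀ hj : j < i + k,
        w ⟨j, hj⟩ = w ⟨j % i, lt_of_lt_of_le (Nat.mod_lt _ hipos) (Nat.le_add_right i k)⟩ := by
    intro w hcond j
    induction j using Nat.strong_induction_on with
    | _ j IH =>
      intro hj
      rcases lt_or_ge j i with hji | hji
      · congr 1
        ext
        exact (Nat.mod_eq_of_lt hji).symm
      · set t := j - i with htdef
        have hjt : j = i + t := by omega
        have htk : t < k := by omega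
        have h1 : t < i + k := by omega
        have hthis := hcond t htk
        rw [extA, extA, dif_pos h1, dif_pos (show i + t < i + k by omega)] at hthis
        have e2 : (⟨j, hj⟩ : Fin (i + k)) = ⟨i + t, by omega⟩ := by
          ext
          show j = i + t
          omega
        rw [e2, ← hthis, IH t (by omega) h1]
        congr 1
        ext
        show t % i = j % i
        rw [hjt, Nat.add_mod_left]
  -- Step 1: reindex the sum
  have step1 : ∑ w : Fin (i + k) → α,
      (if ∀ t < k, extA (i + k) w t = extA (i + k) w (i + t) then
        wordProb step nu eta lam (List.ofFn w) else 0)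
      = ∑ u : Fin i → α, wordProb step nu eta lam (List.ofFn (ext u)) := by
    rw [← Finset.sum_filter]
    apply Finset.sum_nbij'
      (fun w => (fun j : Fin i => w ⟨j, lt_of_lt_of_le j.2 (Nat.le_add_right i k)⟩))
      (fun u => ext u)
    · intro w _; exact Finset.mem_univ _
    · intro u _
      rw [Finset.mem_filter]
      refine ⟨Finset.mem_univ _, ?_⟩
      intro t ht
      have h1 : t < i + k := lt_of_lt_of_le ht (Nat.le_add_left k i)
      have h2 : i + t < i + k := Nat.add_lt_add_left ht i
      rw [extA, extA, dif_pos h1, dif_pos h2]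
      show u _ = u _
      congr 1
      ext
      show t % i = (i + t) % i
      rw [Nat.add_mod_left]
    · intro w hw
      rw [Finset.mem_filter] at hw
      funext j
      show w ⟨(j : ℕ) % i, _⟩ = w j
      exact (key w hw.2 j j.2).symm
    · intro u _
      funext j
      show u ⟨(j : ℕ) % i, _⟩ = u j
      congr 1
      ext
      exact Nat.mod_eq_of_lt j.2
    · intro w hw
      rw [Finset.mem_filter] at hw
      congr 1
      have : (List.ofFn w : List α) = List.ofFn (ext fun j : Fin i => w ⟨j, lt_of_lt_of_le j.2 (Nat.le_add_right i k)⟩) := by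
        congr 1
        funext j
        exact key w hw.2 j j.2
      exact this
  rw [step1]
  -- Step 2: split each extended word and bound
  have step2 : ∀ u : Fin i → α, wordProb step nu eta lam (List.ofFn (ext u))
      ≤ d / lam ^ k * wordProb step nu eta lam (List.ofFn u) := by
    intro u
    have hfe : (fun j : Fin i => ext u (Fin.castAdd k j)) = u := by
      funext j
      show u _ = u j
      congr 1
      ext
      exact Nat.mod_eq_of_lt j.2
    have hsplit : List.ofFn (ext u) = List.ofFn u ++
        List.ofFn (fun t : Fin k => ext u (Fin.natAdd i t)) := by
      rw [List.ofFn_add]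
      show List.ofFn (fun j : Fin i => ext u (Fin.castAdd k j)) ++ _ = _
      rw [hfe]
    rw [hsplit]
    set l2 := List.ofFn (fun t : Fin k => ext u (Fin.natAdd i t)) with hl2
    have hl2len : l2.length = k := List.length_ofFn
    rw [wordProb, wordProb, Finset.mul_sum]
    apply Finset.sum_le_sum
    intro s _
    have hlen : (List.ofFn u ++ l2).length = i + k := by
      rw [List.length_append, List.length_ofFn, hl2len]
    have hlenu : (List.ofFn u).length = i := List.length_ofFn
    rw [follow_append, hlen, hlenu]
    cases h1 : follow step s (List.ofFn u) with
    | none =>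
      show eta s * nu s * 0 ≤ d / lam ^ k * (eta s * nu s * 0)
      simp
    | some t =>
      show eta s * nu s * (match follow step t l2 with
        | some t' => nu t' / (nu s * lam ^ (i + k))
        | none => (0 : ℝ)) ≤ d / lam ^ k * (eta s * nu s * (nu t / (nu s * lam ^ i)))
      cases h2 : follow step t l2 with
      | none =>
        rw [mul_zero]
        exact le_of_lt (mul_pos (div_pos hd0 (pow_pos hlam k))
          (mul_pos (mul_pos (heta s) (hnu s))
            (div_pos (hnu t) (mul_pos (hnu s) (pow_pos hlam i)))))
      | some t' =>
        simp only
        have hnt' : nu t' ≤ d * nu t := (div_le_iff₀ (hnu t)).mp (hd t' t)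
        have heq : d / lam ^ k * (eta s * nu s * (nu t / (nu s * lam ^ i)))
            = eta s * nu s * ((d * nu t) / (nu s * lam ^ (i + k))) := by
          have hs : nu s ≠ 0 := (hnu s).ne'
          have hl : lam ≠ 0 := hlam.ne'
          rw [pow_add]
          field_simp
        rw [heq]
        apply mul_le_mul_of_nonneg_left _ (mul_pos (heta s) (hnu s)).le
        exact div_le_div_of_nonneg_right hnt' (mul_pos (hnu s) (pow_pos hlam (i + k))).le
  calc ∑ u : Fin i → α, wordProb step nu eta lam (List.ofFn (ext u))
      ≤ ∑ u : Fin i → α, d / lam ^ k * wordProb step nu eta lam (List.ofFn u) :=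
        Finset.sum_le_sum fun u _ => step2 u
    _ = d / lam ^ k := by
        rw [← Finset.mul_sum, wordProb_sum step nu eta lam hlam hnu hnorm heig i, mul_one]
    _ ≤ (Fintype.card V : ℝ) * d ^ 2 / lam ^ k := by
        have hc : (1:ℝ) ≤ (Fintype.card V : ℝ) := by exact_mod_cast Fintype.card_pos
        exact div_le_div_of_nonneg_right (by nlinarith) (pow_pos hlam k).le
end

section
/- Let S be an irreducible constrained system with Perron eigenvalue λ and let k = ⌊a log_λ n⌋ with a = (2+ε) log_λ 2 for some ε > 0. Then the capacity of the set of length-n words of S that are additionally k-repeat free equals cap(S) = log₂ λ. -/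
namespace RFaux
variable {V : Type*} (step : V → Bool → Option V)

lemma follow_append (v : V) (l₁ l₂ : List Bool) :
    follow step v (l₁ ++ l₂) = (follow step v l₁).bind (fun u => follow step u l₂) := by
  induction l₁ generalizing v with
  | nil => simp [follow]
  | cons a rest ih =>
    simp only [List.cons_append, follow]
    cases step v a with
    | none => rfl
    | some u => exact ih u

lemma follow_infix {s : V} {L L₁ L₂ L₃ : List Bool} (h : (follow step s L).isSome)
    (hL : L = L₁ ++ L₂ ++ L₃) : ∃ u, (follow step u L₂).isSome := by
  subst hL
  rw [follow_append] at h
  rcases Option.isSome_iff_exists.1 h with ⟨v, hv⟩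
  rcases Option.bind_eq_some_iff.1 hv with ⟨u, hu, _⟩
  rw [follow_append] at hu
  rcases Option.bind_eq_some_iff.1 hu with ⟨u', _, hu'⟩
  exact ⟨u', by simp [hu']⟩

lemma ofFn_slice {n : ℕ} (w : Fin n → Bool) (i m : ℕ) (h : i + m ≤ n) :
    List.ofFn (fun p : Fin m => w ⟨i + p, by omega⟩) =
      ((List.ofFn w).drop i).take m := by
  apply List.ext_getElem
  · simp; omega
  · intro p h1 h2
    simp [List.getElem_take, List.getElem_drop]

lemma bword_slice {n : ℕ} {w : Fin n → Bool}
    (hw : ∃ s : V, (follow step s (List.ofFn w)).isSome) (i m : ℕ) (h : i + m ≤ n) :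
    ∃ s : V, (follow step s (List.ofFn (fun p : Fin m => w ⟨i + p, by omega⟩))).isSome := by
  rcases hw with ⟨s, hs⟩
  rw [ofFn_slice (h := h)]
  refine follow_infix step (L₁ := (List.ofFn w).take i)
    (L₃ := ((List.ofFn w).drop i).drop m) hs ?_
  rw [List.append_assoc, List.take_append_drop, List.take_append_drop]

lemma bword_of_eq {n m i : ℕ} {w : Fin n → Bool}
    (hw : ∃ s : V, (follow step s (List.ofFn w)).isSome) (h : i + m ≤ n)
    (g : Fin m → Bool) (hg : ∀ p : Fin m, g p = w ⟨i + p, by omega⟩) :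
    ∃ s : V, (follow step s (List.ofFn g)).isSome := by
  have : g = fun p : Fin m => w ⟨i + p, by omega⟩ := funext hg
  rw [this]
  exact bword_slice step hw i m h

variable [Fintype V]

open Classical in
noncomputable def Bfin (n : ℕ) : Finset (Fin n → Bool) :=
  Finset.univ.filter (fun w => ∃ s : V, (follow step s (List.ofFn w)).isSome)

open Classical in
lemma Ncard_eq (n : ℕ) :
    Nat.card {w : Fin n → Bool // ∃ s : V, (follow step s (List.ofFn w)).isSome}
      = (Bfin step n).card := by
  rw [Nat.card_eq_fintype_card, Fintype.card_subtype, Bfin]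

lemma mem_Bfin {n : ℕ} {w : Fin n → Bool} :
    w ∈ Bfin step n ↔ ∃ s : V, (follow step s (List.ofFn w)).isSome := by
  classical simp [Bfin]

lemma N_le_pow (n : ℕ) : (Bfin step n).card ≤ 2 ^ n := by
  calc (Bfin step n).card ≤ (Finset.univ : Finset (Fin n → Bool)).card :=
        Finset.card_le_card (Finset.filter_subset _ _)
    _ = 2 ^ n := by simp [Finset.card_univ]

lemma N_subadd (m l : ℕ) :
    (Bfin step (m + l)).card ≤ (Bfin step m).card * (Bfin step l).card := by
  classical
  rw [← Finset.card_product]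
  apply Finset.card_le_card_of_injOn
    (fun w => (fun p : Fin m => w ⟨p.1, by omega⟩, fun q : Fin l => w ⟨m + q.1, by omega⟩))
  · intro w hw
    rw [Finset.mem_coe, mem_Bfin] at hw
    rw [Finset.mem_coe, Finset.mem_product, mem_Bfin, mem_Bfin]
    constructor
    · exact bword_of_eq step hw (i := 0) (by omega) _ (fun p => congrArg w (Fin.ext (Nat.zero_add p.1).symm))
    · exact bword_of_eq step hw (i := m) (by omega) _ (fun p => rfl)
  · intro w _ w' _ h
    simp only [Prod.mk.injEq] at h
    funext p
    rcases lt_or_ge p.1 m with hp | hp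
    · have := congrFun h.1 ⟨p.1, hp⟩
      simpa using this
    · have := congrFun h.2 ⟨p.1 - m, by omega⟩
      simp only at this
      have e : (⟨m + (p.1 - m), by omega⟩ : Fin (m + l)) = p := Fin.ext (by simp; omega)
      rwa [e] at this

section Join
variable [Nonempty V] (conn : V → V → List Bool)

open Classical in
noncomputable def jst {m l : ℕ} (p : (Fin m → Bool) × (Fin l → Bool)) : V × V :=
  if h : (∃ s : V, (follow step s (List.ofFn p.1)).isSome) ∧
      (∃ s : V, (follow step s (List.ofFn p.2)).isSome) then
    ((follow step h.1.choose (List.ofFn p.1)).get h.1.choose_spec, h.2.choose)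
  else (Classical.arbitrary V, Classical.arbitrary V)

noncomputable def jlist {m l : ℕ} (p : (Fin m → Bool) × (Fin l → Bool)) : List Bool :=
  List.ofFn p.1 ++ conn (jst step p).1 (jst step p).2 ++ List.ofFn p.2

lemma jlist_length {m l : ℕ} (p : (Fin m → Bool) × (Fin l → Bool)) :
    (jlist step conn p).length = m + l + (conn (jst step p).1 (jst step p).2).length := by
  simp [jlist]; omega

lemma jlist_readable {m l : ℕ} {p : (Fin m → Bool) × (Fin l → Bool)}
    (h1 : ∃ s : V, (follow step s (List.ofFn p.1)).isSome)
    (h2 : ∃ s : V, (follow step s (List.ofFn p.2)).isSome)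
    (hconnf : ∀ u v : V, follow step u (conn u v) = some v) :
    ∃ s : V, (follow step s (jlist step conn p)).isSome := by
  have hc : (∃ s : V, (follow step s (List.ofFn p.1)).isSome) ∧
      (∃ s : V, (follow step s (List.ofFn p.2)).isSome) := ⟨h1, h2⟩
  refine ⟨hc.1.choose, ?_⟩
  obtain ⟨t, ht⟩ := Option.isSome_iff_exists.1 hc.1.choose_spec
  rw [jlist, follow_append, follow_append, jst, dif_pos hc]
  simp only [ht, Option.bind_some, Option.get_some]
  rw [hconnf]
  simp only [Option.bind_some]
  exact hc.2.choose_spec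

noncomputable def jfun {m l : ℕ} (p : (Fin m → Bool) × (Fin l → Bool)) :
    Σ d : ℕ, (Fin (m + l + d) → Bool) :=
  ⟨(conn (jst step p).1 (jst step p).2).length, fun q => (jlist step conn p).getD q.1 false⟩

lemma ofFn_jfun {m l : ℕ} (p : (Fin m → Bool) × (Fin l → Bool)) :
    List.ofFn (jfun step conn p).2 = jlist step conn p := by
  apply List.ext_getElem
  · simp [jfun, jlist_length]
  · intro q h1 h2
    simp only [jfun, List.getElem_ofFn]
    rw [List.getD_eq_getElem?_getD, List.getElem?_eq_getElem h2]
    rfl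

lemma jfun_inj {m l : ℕ} {p p' : (Fin m → Bool) × (Fin l → Bool)}
    (h : jfun step conn p = jfun step conn p') : p = p' := by
  have hd : (conn (jst step p).1 (jst step p).2).length
      = (conn (jst step p').1 (jst step p').2).length := congrArg Sigma.fst h
  have hg : ∀ q : ℕ, (jlist step conn p).getD q false = (jlist step conn p').getD q false := by
    intro q
    have := congrArg (fun x : (Σ d : ℕ, (Fin (m + l + d) → Bool)) =>
      if hq : q < m + l + x.1 then x.2 ⟨q, hq⟩ else false) h
    simp only [jfun] at this
    by_cases hq : q < m + l + (conn (jst step p).1 (jst step p).2).length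
    · have hq' : q < m + l + (conn (jst step p').1 (jst step p').2).length := hd ▸ hq
      simp only [hq, hq', ↓reduceDIte] at this
      exact this
    · have e1 : (jlist step conn p).getD q false = false := by
        rw [List.getD_eq_getElem?_getD, List.getElem?_eq_none (by rw [jlist_length]; omega)]
        rfl
      have e2 : (jlist step conn p').getD q false = false := by
        rw [List.getD_eq_getElem?_getD, List.getElem?_eq_none (by rw [jlist_length]; omega)]
        rfl
      rw [e1, e2]
  have hL : jlist step conn p = jlist step conn p' := by
    apply List.ext_getElem
    · rw [jlist_length, jlist_length, hd]
    · intro q h1 h2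
      have := hg q
      rw [List.getD_eq_getElem?_getD, List.getD_eq_getElem?_getD,
        List.getElem?_eq_getElem h1, List.getElem?_eq_getElem h2] at this
      exact this
  have h1 : p.1 = p'.1 := by
    apply List.ofFn_injective
    have e1 : List.ofFn p.1 = (jlist step conn p).take m := by
      rw [jlist, List.append_assoc, List.take_left' (by simp)]
    have e2 : List.ofFn p'.1 = (jlist step conn p').take m := by
      rw [jlist, List.append_assoc, List.take_left' (by simp)]
    rw [e1, e2, hL]
  have h2 : p.2 = p'.2 := by
    apply List.ofFn_injective
    have e1 : List.ofFn p.2 = (jlist step conn p).drop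
        (m + (conn (jst step p).1 (jst step p).2).length) := by
      rw [jlist, List.drop_left' (by simp)]
    have e2 : List.ofFn p'.2 = (jlist step conn p').drop
        (m + (conn (jst step p).1 (jst step p).2).length) := by
      rw [jlist, hd, List.drop_left' (by simp [hd])]
    rw [e1, e2, hL]
  exact Prod.ext h1 h2

lemma N_join (hconnf : ∀ u v : V, follow step u (conn u v) = some v)
    (D : ℕ) (hD : ∀ u v : V, (conn u v).length ≤ D) (m l : ℕ) :
    (Bfin step m).card * (Bfin step l).card ≤
      ∑ d ∈ Finset.range (D + 1), (Bfin step (m + l + d)).card := by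
  classical
  rw [← Finset.card_product, ← Finset.card_sigma]
  apply Finset.card_le_card_of_injOn (jfun step conn)
  · intro p hp
    rw [Finset.mem_coe, Finset.mem_product, mem_Bfin, mem_Bfin] at hp
    rw [Finset.mem_coe, Finset.mem_sigma]
    constructor
    · exact Finset.mem_range.2 (Nat.lt_succ_of_le (hD _ _))
    · rw [mem_Bfin]
      rw [show (List.ofFn (jfun step conn p).2 : List Bool) = jlist step conn p from
        ofFn_jfun step conn p]
      exact jlist_readable step conn hp.1 hp.2 hconnf
  · intro p _ p' _ h
    exact jfun_inj step conn h

end Join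

section Bad

def RF (n k : ℕ) (w : Fin n → Bool) : Prop :=
  ∀ i j : ℕ, i < j → j + k ≤ n → ∃ t < k, extB n w (i + t) ≠ extB n w (j + t)

def badP (n k : ℕ) (w : Fin n → Bool) : Prop :=
  ∃ ij : ℕ × ℕ, ij.1 < ij.2 ∧ ij.2 + k ≤ n ∧
    ∀ t < k, extB n w (ij.1 + t) = extB n w (ij.2 + t)

lemma badP_of_not_RF {n k : ℕ} {w : Fin n → Bool} (h : ¬ RF n k w) : badP n k w := by
  rw [RF] at h
  push_neg at h
  obtain ⟨i, j, h1, h2, h3⟩ := h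
  exact ⟨(i, j), h1, h2, h3⟩

lemma extB_lt {n : ℕ} (w : Fin n → Bool) {x : ℕ} (h : x < n) : extB n w x = w ⟨x, h⟩ :=
  dif_pos h

open Classical in
noncomputable def badIJ (n k : ℕ) (w : Fin n → Bool) : ℕ × ℕ :=
  if h : badP n k w then h.choose else (0, 1)

lemma badIJ_spec {n k : ℕ} {w : Fin n → Bool} (h : badP n k w) :
    (badIJ n k w).1 < (badIJ n k w).2 ∧ (badIJ n k w).2 + k ≤ n ∧
      ∀ t < k, extB n w ((badIJ n k w).1 + t) = extB n w ((badIJ n k w).2 + t) := by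
  rw [badIJ, dif_pos h]
  exact h.choose_spec

noncomputable def badFun (n k : ℕ) (w : Fin n → Bool) :
    Σ ij : ℕ × ℕ, ((Fin ij.2 → Bool) × (Fin (n - ij.2 - k) → Bool)) :=
  ⟨badIJ n k w, (fun p => extB n w p.1,
    fun p => extB n w ((badIJ n k w).2 + k + p.1))⟩

def badProj (n k : ℕ)
    (x : Σ ij : ℕ × ℕ, ((Fin ij.2 → Bool) × (Fin (n - ij.2 - k) → Bool))) :
    (ℕ × ℕ) × (ℕ → Bool) × (ℕ → Bool) :=
  (x.1, fun q => if h : q < x.1.2 then x.2.1 ⟨q, h⟩ else false,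
    fun q => if h : q < n - x.1.2 - k then x.2.2 ⟨q, h⟩ else false)

open Classical in
lemma bad_card (n k : ℕ) :
    ((Bfin step n).filter (fun w => ¬ RF n k w)).card ≤
      ∑ ij ∈ (Finset.range (n + 1) ×ˢ Finset.range (n + 1)).filter
          (fun ij : ℕ × ℕ => ij.1 < ij.2 ∧ ij.2 + k ≤ n),
        (Bfin step ij.2).card * (Bfin step (n - ij.2 - k)).card := by
  classical
  have hsum : ∀ ij : ℕ × ℕ, (Bfin step ij.2).card * (Bfin step (n - ij.2 - k)).card
      = ((Bfin step ij.2) ×ˢ (Bfin step (n - ij.2 - k))).card := fun ij =>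
    (Finset.card_product _ _).symm
  rw [Finset.sum_congr rfl (fun ij _ => hsum ij), ← Finset.card_sigma]
  apply Finset.card_le_card_of_injOn (badFun n k)
  · intro w hw
    rw [Finset.mem_coe, Finset.mem_filter, mem_Bfin] at hw
    have hb : badP n k w := badP_of_not_RF hw.2
    obtain ⟨hs1, hs2, -⟩ := badIJ_spec hb
    rw [Finset.mem_coe, Finset.mem_sigma]
    refine ⟨?_, ?_⟩
    · simp only [Finset.mem_filter, Finset.mem_product, Finset.mem_range, badFun]
      exact ⟨⟨by omega, by omega⟩, hs1, hs2⟩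
    · rw [badFun, Finset.mem_product, mem_Bfin, mem_Bfin]
      constructor
      · refine bword_of_eq step hw.1 (i := 0) (m := (badIJ n k w).2) (by omega) _ (fun p => ?_)
        have hp := p.isLt
        exact (extB_lt w (show p.1 < n by omega)).trans
          (congrArg w (Fin.ext (Nat.zero_add p.1).symm))
      · refine bword_of_eq step hw.1 (i := (badIJ n k w).2 + k)
          (m := n - (badIJ n k w).2 - k) (by omega) _ (fun p => ?_)
        have hp := p.isLt
        exact extB_lt w (show (badIJ n k w).2 + k + p.1 < n by omega)
  · intro w hw w' hw' h
    rw [Finset.mem_coe, Finset.mem_filter] at hw hw'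
    have hb : badP n k w := badP_of_not_RF hw.2
    have hb' : badP n k w' := badP_of_not_RF hw'.2
    have hij : badIJ n k w = badIJ n k w' := congrArg (fun x => x.1) h
    obtain ⟨hs1, hs2, hs3⟩ := badIJ_spec hb
    have hspec' := badIJ_spec hb'
    rw [← hij] at hspec'
    obtain ⟨-, -, hs3'⟩ := hspec'
    have hproj := congrArg (badProj n k) h
    simp only [badFun, badProj, Prod.mk.injEq] at hproj
    obtain ⟨-, hF1, hF2⟩ := hproj
    simp only [← hij] at hF1 hF2
    set i := (badIJ n k w).1 with hidef
    set j := (badIJ n k w).2 with hjdef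
    have hA : ∀ r, r < j → extB n w r = extB n w' r := by
      intro r hr
      have := congrFun hF1 r
      have hr' : r < (badIJ n k w).2 := hr
      have hr'' : r < (badIJ n k w').2 := hij ▸ hr
      simp only [hr', hr'', ↓reduceDIte] at this
      exact this
    have hB : ∀ r, r < n - j - k → extB n w (j + k + r) = extB n w' (j + k + r) := by
      intro r hr
      have := congrFun hF2 r
      have hr' : r < n - (badIJ n k w).2 - k := hr
      simp only [hr', ↓reduceDIte] at this
      exact this
    have H : ∀ q : ℕ, extB n w q = extB n w' q := by
      intro q
      induction q using Nat.strong_induction_on with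
      | _ q IH =>
        by_cases hq0 : q < n
        · by_cases hq1 : q < j
          · exact hA q hq1
          · by_cases hq2 : j + k ≤ q
            · have e : j + k + (q - (j + k)) = q := by omega
              have := hB (q - (j + k)) (by omega)
              rwa [e] at this
            · have ht : q - j < k := by omega
              have e : j + (q - j) = q := by omega
              calc extB n w q = extB n w (j + (q - j)) := by rw [e]
                _ = extB n w (i + (q - j)) := (hs3 (q - j) ht).symm
                _ = extB n w' (i + (q - j)) := IH (i + (q - j)) (by omega)
                _ = extB n w' (j + (q - j)) := hs3' (q - j) ht
                _ = extB n w' q := by rw [e]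
        · rw [extB, extB, dif_neg hq0, dif_neg hq0]
    funext p
    have := H p.1
    rwa [extB_lt w p.isLt, extB_lt w' p.isLt] at this

end Bad


end RFaux

open Filter Real in
set_option maxHeartbeats 1000000 in
/-- Let `S` be an irreducible constrained system, presented by a deterministic strongly
connected labeled graph, with Perron eigenvalue `λ` (so that `cap(S) = log₂ λ`). For
`k = ⌊a log_λ n⌋` with `a = (2+ε) log_λ 2`, `ε > 0`, the capacity of the length-`n` words of
`S` that are additionally `k`-repeat free equals `cap(S) = log₂ λ`. -/
theorem stmt_16 {V : Type*} [Fintype V] (step : V → Bool → Option V)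
    (hconn : ∀ u v : V, ∃ l : List Bool, follow step u l = some v)
    (lam : ℝ) (hlam : 1 < lam)
    (hcap : Filter.limsup (fun n : ℕ => (1 / (n : ℝ)) * Real.logb 2
        (Nat.card {w : Fin n → Bool // ∃ s : V, (follow step s (List.ofFn w)).isSome}))
        Filter.atTop = Real.logb 2 lam)
    (ε : ℝ) (hε : 0 < ε) :
    Filter.limsup (fun n : ℕ => (1 / (n : ℝ)) * Real.logb 2
      (Nat.card {w : Fin n → Bool //
        (∃ s : V, (follow step s (List.ofFn w)).isSome) ∧
        ∀ i j : ℕ, i < j → j + ⌊((2 + ε) * Real.logb lam 2) * Real.logb lam n⌋₊ ≤ n →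
          ∃ t < ⌊((2 + ε) * Real.logb lam 2) * Real.logb lam n⌋₊,
            extB n w (i + t) ≠ extB n w (j + t)})) Filter.atTop
      = Real.logb 2 lam := by
  classical
  set c : ℝ := Real.logb 2 lam with hc
  set N : ℕ → ℕ := fun n => (RFaux.Bfin step n).card with hN
  have hNcast : ∀ n : ℕ, Nat.card {w : Fin n → Bool //
      ∃ s : V, (follow step s (List.ofFn w)).isSome} = N n := fun n => RFaux.Ncard_eq step n
  have hcap' : Filter.limsup (fun n : ℕ => Real.logb 2 (N n) / n) Filter.atTop = c := by
    rw [← hcap]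
    apply Filter.limsup_congr
    filter_upwards with n
    rw [hNcast n, one_div, inv_mul_eq_div]
  have hsub_le : ∀ m l, N (m + l) ≤ N m * N l := RFaux.N_subadd step
  have hNpow : ∀ n, N n ≤ 2 ^ n := RFaux.N_le_pow step
  have hc_pos : 0 < c := Real.logb_pos one_lt_two hlam
  have hNpos : ∀ n, 0 < N n := by
    by_contra hcon
    push_neg at hcon
    obtain ⟨m, hm⟩ := hcon
    have hm0 : N m = 0 := by omega
    have hzero : ∀ n, m ≤ n → N n = 0 := by
      intro n hn
      have h1 := hsub_le m (n - m)
      rw [Nat.add_sub_cancel' hn] at h1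
      rw [hm0] at h1
      omega
    have hev : (fun n : ℕ => Real.logb 2 (N n) / n) =ᶠ[Filter.atTop] (fun _ => (0:ℝ)) := by
      filter_upwards [Filter.eventually_ge_atTop m] with n hn
      rw [hzero n hn]
      simp
    rw [Filter.limsup_congr hev, Filter.limsup_const] at hcap'
    linarith
  have hNpos' : ∀ n, (0:ℝ) < (N n : ℝ) := fun n => by exact_mod_cast hNpos n
  set a : ℕ → ℝ := fun n => Real.logb 2 (N n) with ha
  have ha_nonneg : ∀ n, 0 ≤ a n := fun n =>
    Real.logb_nonneg one_lt_two (by exact_mod_cast hNpos n)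
  have hsub : Subadditive a := by
    intro m l
    have h2 : ((N (m + l) : ℕ) : ℝ) ≤ ((N m * N l : ℕ) : ℝ) := by exact_mod_cast hsub_le m l
    calc a (m + l) ≤ Real.logb 2 ((N m : ℝ) * (N l : ℝ)) := by
          refine Real.logb_le_logb_of_le one_lt_two (hNpos' _) ?_
          push_cast at h2 ⊢
          exact h2
      _ = a m + a l := Real.logb_mul (ne_of_gt (hNpos' m)) (ne_of_gt (hNpos' l))
  have hbdd : BddBelow (Set.range fun n => a n / n) := by
    refine ⟨0, ?_⟩
    rintro x ⟨n, rfl⟩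
    have := ha_nonneg n
    positivity
  have htends : Filter.Tendsto (fun n => a n / n) Filter.atTop (nhds hsub.lim) :=
    hsub.tendsto_lim hbdd
  have hlimc : hsub.lim = c := by
    rw [← hcap']
    exact htends.limsup_eq.symm
  have ha_ge : ∀ n : ℕ, c * n ≤ a n := by
    intro n
    rcases Nat.eq_zero_or_pos n with rfl | hn
    · simpa using ha_nonneg 0
    · have h1 := hsub.lim_le_div hbdd (n := n) (by omega)
      rw [hlimc] at h1
      have hn' : (0:ℝ) < n := by exact_mod_cast hn
      calc c * n ≤ (a n / n) * n := by nlinarith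
        _ = a n := by field_simp
  have hc1 : c ≤ 1 := by
    have h1 := ha_ge 1
    have h2 : a 1 ≤ 1 := by
      have h3 : ((N 1 : ℕ) : ℝ) ≤ 2 := by exact_mod_cast hNpow 1
      have := Real.logb_le_logb_of_le one_lt_two (hNpos' 1) h3
      simpa using this
    simpa using h1.trans h2
  have hlam0 : (0:ℝ) < lam := by linarith
  have hlam2 : lam ≤ 2 := by
    by_contra h23
    push_neg at h23
    have h24 : Real.logb 2 2 < Real.logb 2 lam :=
      Real.logb_lt_logb one_lt_two (by norm_num) h23
    rw [Real.logb_self_eq_one (by norm_num)] at h24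
    linarith
  have hVne : Nonempty V := by
    obtain ⟨w, hw⟩ := Finset.card_pos.1 (hNpos 0)
    rw [RFaux.mem_Bfin] at hw
    exact ⟨hw.choose⟩
  set conn : V → V → List Bool := fun u v => (hconn u v).choose with hconn_def
  have hconnf : ∀ u v, follow step u (conn u v) = some v := fun u v => (hconn u v).choose_spec
  set D : ℕ := Finset.univ.sup (fun p : V × V => (conn p.1 p.2).length) with hD
  have hDle : ∀ u v, (conn u v).length ≤ D := fun u v =>
    Finset.le_sup (f := fun p : V × V => (conn p.1 p.2).length) (Finset.mem_univ (u, v))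
  have hjoin : ∀ m l, N m * N l ≤ ∑ d ∈ Finset.range (D + 1), N (m + l + d) :=
    RFaux.N_join step conn hconnf D hDle
  set E : ℝ := Real.logb 2 ((D + 1 : ℝ) * 2 ^ D) with hE
  have hDE1 : (1:ℝ) ≤ (D + 1 : ℝ) * 2 ^ D := by
    have h1 : (1:ℝ) ≤ (D:ℝ) + 1 := by
      have := Nat.cast_nonneg (α := ℝ) D
      linarith
    have h2 : (1:ℝ) ≤ (2:ℝ) ^ D := one_le_pow₀ (by norm_num)
    nlinarith
  have hE0 : 0 ≤ E := Real.logb_nonneg one_lt_two hDE1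
  have ha_join : ∀ m l, a m + a l ≤ a (m + l) + E := by
    intro m l
    have h1 : N m * N l ≤ (D + 1) * 2 ^ D * N (m + l) := by
      calc N m * N l ≤ ∑ d ∈ Finset.range (D + 1), N (m + l + d) := hjoin m l
        _ ≤ ∑ _d ∈ Finset.range (D + 1), (N (m + l) * 2 ^ D) := by
            refine Finset.sum_le_sum fun d hd => ?_
            rw [Finset.mem_range] at hd
            calc N (m + l + d) ≤ N (m + l) * N d := hsub_le (m + l) d
              _ ≤ N (m + l) * 2 ^ d := Nat.mul_le_mul_left _ (hNpow d)
              _ ≤ N (m + l) * 2 ^ D := Nat.mul_le_mul_left _ (Nat.pow_le_pow_right (by norm_num) (by omega))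
        _ = (D + 1) * (N (m + l) * 2 ^ D) := by
            rw [Finset.sum_const, Finset.card_range, smul_eq_mul]
        _ = (D + 1) * 2 ^ D * N (m + l) := by ring
    have h2 : (N m : ℝ) * N l ≤ ((D + 1 : ℝ) * 2 ^ D) * N (m + l) := by
      exact_mod_cast h1
    calc a m + a l = Real.logb 2 ((N m : ℝ) * N l) :=
          (Real.logb_mul (ne_of_gt (hNpos' m)) (ne_of_gt (hNpos' l))).symm
      _ ≤ Real.logb 2 (((D + 1 : ℝ) * 2 ^ D) * N (m + l)) :=
          Real.logb_le_logb_of_le one_lt_two (mul_pos (hNpos' m) (hNpos' l)) h2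
      _ = E + a (m + l) := Real.logb_mul (by positivity) (ne_of_gt (hNpos' (m + l)))
      _ = a (m + l) + E := by ring
  have ha_dbl : ∀ n, 2 * a n ≤ a (2 * n) + E := by
    intro n
    have h0 := ha_join n n
    have e : n + n = 2 * n := by ring
    rw [e] at h0
    linarith
  have ha_pow : ∀ t n : ℕ, (2:ℝ) ^ t * a n ≤ a (2 ^ t * n) + ((2:ℝ) ^ t - 1) * E := by
    intro t n
    induction t with
    | zero => simp
    | succ t IH =>
      have h1 := ha_dbl (2 ^ t * n)
      have e : 2 * (2 ^ t * n) = 2 ^ (t + 1) * n := by ring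
      rw [e] at h1
      calc (2:ℝ) ^ (t + 1) * a n = 2 * ((2:ℝ) ^ t * a n) := by ring
        _ ≤ 2 * (a (2 ^ t * n) + ((2:ℝ) ^ t - 1) * E) := by linarith
        _ = 2 * a (2 ^ t * n) + ((2:ℝ) ^ (t + 1) - 2) * E := by ring
        _ ≤ a (2 ^ (t + 1) * n) + E + ((2:ℝ) ^ (t + 1) - 2) * E := by linarith
        _ = a (2 ^ (t + 1) * n) + ((2:ℝ) ^ (t + 1) - 1) * E := by ring
  have ha_le : ∀ n : ℕ, a n ≤ c * n + E := by
    intro n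
    rcases Nat.eq_zero_or_pos n with rfl | hn
    · have hN0 : N 0 = 1 := le_antisymm (by simpa using hNpow 0) (hNpos 0)
      have ha0 : a 0 = 0 := by
        show Real.logb 2 (N 0) = 0
        rw [hN0]
        simp
      rw [ha0]
      simp only [Nat.cast_zero, mul_zero, zero_add]
      exact hE0
    · have hmono : Filter.Tendsto (fun t : ℕ => 2 ^ t * n) Filter.atTop Filter.atTop := by
        apply Filter.tendsto_atTop_mono (f := id)
        · intro t
          calc (id t : ℕ) ≤ 2 ^ t := (Nat.lt_two_pow_self).le
            _ ≤ 2 ^ t * n := Nat.le_mul_of_pos_right _ hn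
        · exact Filter.tendsto_id
      have hcomp : Filter.Tendsto (fun t : ℕ => a (2 ^ t * n) / ((2 ^ t * n : ℕ) : ℝ))
          Filter.atTop (nhds c) := by
        have := htends.comp hmono
        rw [hlimc] at this
        exact this
      have hseq : Filter.Tendsto (fun t : ℕ => a (2 ^ t * n) / 2 ^ t + E)
          Filter.atTop (nhds (c * n + E)) := by
        have h5 := (hcomp.mul_const (n : ℝ)).add_const E
        refine h5.congr fun t => ?_
        have hne1 : ((2:ℝ)) ^ t ≠ 0 := by positivity
        have hne2 : (n:ℝ) ≠ 0 := by exact_mod_cast hn.ne'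
        have hcast : ((2 ^ t * n : ℕ) : ℝ) = (2:ℝ) ^ t * n := by push_cast; ring
        rw [hcast]
        field_simp
      have hb : ∀ t : ℕ, a n ≤ a (2 ^ t * n) / 2 ^ t + E := by
        intro t
        have h6 := ha_pow t n
        have h2p : (0:ℝ) < 2 ^ t := by positivity
        have h7 : (2:ℝ) ^ t * a n ≤ a (2 ^ t * n) + (2:ℝ) ^ t * E := by linarith
        calc a n = ((2:ℝ) ^ t * a n) / 2 ^ t :=
              (mul_div_cancel_left₀ _ (ne_of_gt h2p)).symm
          _ ≤ (a (2 ^ t * n) + (2:ℝ) ^ t * E) / 2 ^ t := by gcongr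
          _ = a (2 ^ t * n) / 2 ^ t + E := by
              rw [add_div, mul_div_cancel_left₀ _ (ne_of_gt h2p)]
      exact ge_of_tendsto' hseq hb
  -- the repeat-free count
  set k : ℕ → ℕ := fun n => ⌊((2 + ε) * Real.logb lam 2) * Real.logb lam n⌋₊ with hk
  set G : ℕ → ℕ := fun n =>
    ((RFaux.Bfin step n).filter (fun w => RFaux.RF n (k n) w)).card with hG
  set Bad : ℕ → ℕ := fun n =>
    ((RFaux.Bfin step n).filter (fun w => ¬ RFaux.RF n (k n) w)).card with hBad
  have hsplit : ∀ n, N n = G n + Bad n := fun n =>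
    (Finset.card_filter_add_card_filter_not (s := RFaux.Bfin step n)
      (p := fun w => RFaux.RF n (k n) w)).symm
  have hGcard : ∀ n : ℕ, Nat.card {w : Fin n → Bool //
      (∃ s : V, (follow step s (List.ofFn w)).isSome) ∧
      ∀ i j : ℕ, i < j → j + ⌊((2 + ε) * Real.logb lam 2) * Real.logb lam (n:ℝ)⌋₊ ≤ n →
        ∃ t < ⌊((2 + ε) * Real.logb lam 2) * Real.logb lam (n:ℝ)⌋₊,
          extB n w (i + t) ≠ extB n w (j + t)} = G n := by
    intro n
    rw [Nat.card_eq_fintype_card, Fintype.card_subtype]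
    show _ = ((RFaux.Bfin step n).filter (fun w => RFaux.RF n (k n) w)).card
    congr 1
    ext w
    simp only [Finset.mem_filter, Finset.mem_univ, true_and, RFaux.mem_Bfin, RFaux.RF, hk]
  have hbadcard : ∀ n, Bad n ≤ ∑ ij ∈ (Finset.range (n + 1) ×ˢ Finset.range (n + 1)).filter
      (fun ij : ℕ × ℕ => ij.1 < ij.2 ∧ ij.2 + k n ≤ n),
      N ij.2 * N (n - ij.2 - k n) := fun n => RFaux.bad_card step n (k n)
  have hN_real : ∀ n : ℕ, (N n : ℝ) ≤ 2 ^ (c * n + E) := fun n =>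
    (Real.logb_le_iff_le_rpow one_lt_two (hNpos' n)).1 (ha_le n)
  have hN_ge : ∀ n : ℕ, (2:ℝ) ^ (c * n) ≤ N n := fun n =>
    (Real.le_logb_iff_rpow_le one_lt_two (hNpos' n)).1 (ha_ge n)
  have hBad_real : ∀ n : ℕ,
      (Bad n : ℝ) ≤ ((n:ℝ) + 1) ^ 2 * 2 ^ (c * ((n:ℝ) - k n) + 2 * E) := by
    intro n
    have h1 := hbadcard n
    set P := (Finset.range (n + 1) ×ˢ Finset.range (n + 1)).filter
      (fun ij : ℕ × ℕ => ij.1 < ij.2 ∧ ij.2 + k n ≤ n) with hP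
    have hterm : ∀ ij ∈ P, ((N ij.2 : ℝ) * N (n - ij.2 - k n))
        ≤ (2:ℝ) ^ (c * ((n:ℝ) - k n) + 2 * E) := by
      intro ij hij
      rw [hP, Finset.mem_filter] at hij
      obtain ⟨-, hlt, hle⟩ := hij
      have e0 : (n - ij.2 - k n : ℕ) = n - (ij.2 + k n) := by omega
      have e1 : ((n - ij.2 - k n : ℕ) : ℝ) = (n:ℝ) - ij.2 - k n := by
        rw [e0, Nat.cast_sub hle]
        push_cast
        ring
      calc (N ij.2 : ℝ) * N (n - ij.2 - k n)
          ≤ 2 ^ (c * ij.2 + E) * 2 ^ (c * ((n - ij.2 - k n : ℕ):ℝ) + E) := by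
            apply mul_le_mul (hN_real _) (hN_real _) (le_of_lt (hNpos' _)) (by positivity)
        _ = 2 ^ ((c * ij.2 + E) + (c * ((n - ij.2 - k n : ℕ):ℝ) + E)) :=
            (Real.rpow_add two_pos _ _).symm
        _ = 2 ^ (c * ((n:ℝ) - k n) + 2 * E) := by
            rw [e1]
            congr 1
            ring
    calc (Bad n : ℝ) ≤ ((∑ ij ∈ P, N ij.2 * N (n - ij.2 - k n) : ℕ) : ℝ) := by
          exact_mod_cast h1
      _ = ∑ ij ∈ P, ((N ij.2 : ℝ) * N (n - ij.2 - k n)) := by push_cast; rfl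
      _ ≤ ∑ _ij ∈ P, (2:ℝ) ^ (c * ((n:ℝ) - k n) + 2 * E) := Finset.sum_le_sum hterm
      _ = (P.card : ℝ) * 2 ^ (c * ((n:ℝ) - k n) + 2 * E) := by
          rw [Finset.sum_const, nsmul_eq_mul]
      _ ≤ ((n:ℝ) + 1) ^ 2 * 2 ^ (c * ((n:ℝ) - k n) + 2 * E) := by
          have hcard : (P.card : ℝ) ≤ ((n:ℝ) + 1) ^ 2 := by
            have h2 : P.card ≤ (n + 1) * (n + 1) := by
              calc P.card ≤ ((Finset.range (n + 1) ×ˢ Finset.range (n + 1))).card :=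
                    Finset.card_filter_le _ _
                _ = (n + 1) * (n + 1) := by
                    rw [Finset.card_product, Finset.card_range]
            have h3 : ((P.card : ℕ) : ℝ) ≤ (((n + 1) * (n + 1) : ℕ) : ℝ) := by exact_mod_cast h2
            push_cast at h3
            nlinarith [h3]
          have h4 : (0:ℝ) ≤ 2 ^ (c * ((n:ℝ) - k n) + 2 * E) := by positivity
          exact mul_le_mul_of_nonneg_right hcard h4
  have hkc : ∀ n : ℕ, 2 ≤ n → (2 + ε) * Real.logb 2 n - c ≤ c * k n := by
    intro n hn2
    have hlog2 : (0:ℝ) < Real.log 2 := Real.log_pos one_lt_two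
    have hloglam : (0:ℝ) < Real.log lam := Real.log_pos hlam
    have hx : c * (((2 + ε) * Real.logb lam 2) * Real.logb lam n) = (2 + ε) * Real.logb lam n := by
      rw [hc]
      simp only [Real.logb]
      field_simp
    have hfloor : (((2 + ε) * Real.logb lam 2) * Real.logb lam (n:ℝ)) - 1 < ((k n : ℕ) : ℝ) := by
      rw [hk]
      exact Nat.sub_one_lt_floor _
    have h5 : c * ((((2 + ε) * Real.logb lam 2) * Real.logb lam (n:ℝ)) - 1) ≤ c * k n :=
      mul_le_mul_of_nonneg_left hfloor.le hc_pos.le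
    have h2 : Real.logb 2 (n:ℝ) ≤ Real.logb lam (n:ℝ) := by
      simp only [Real.logb]
      apply div_le_div_of_nonneg_left (Real.log_nonneg (by exact_mod_cast Nat.one_le_of_lt hn2))
        hloglam
      exact Real.log_le_log hlam0 hlam2
    have h6 : (2 + ε) * Real.logb 2 (n:ℝ) ≤ (2 + ε) * Real.logb lam (n:ℝ) :=
      mul_le_mul_of_nonneg_left h2 (by linarith)
    nlinarith [hx, h5, h6]
  have hev : ∀ᶠ n : ℕ in Filter.atTop, (Bad n : ℝ) ≤ 2 ^ (c * (n:ℝ) - 1) := by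
    have htendlog : Filter.Tendsto (fun n : ℕ => Real.logb 2 (n:ℝ)) Filter.atTop Filter.atTop :=
      (Real.tendsto_logb_atTop one_lt_two).comp tendsto_natCast_atTop_atTop
    filter_upwards [htendlog.eventually_ge_atTop ((3 + 2 * E + c) / ε),
      Filter.eventually_ge_atTop 2] with n hlogn hn2
    have hn1 : (1:ℝ) ≤ (n:ℝ) := by exact_mod_cast Nat.one_le_of_lt hn2
    have hnpos : (0:ℝ) < (n:ℝ) + 1 := by linarith
    have hL : Real.logb 2 ((n:ℝ) + 1) ≤ 1 + Real.logb 2 (n:ℝ) := by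
      have hle : ((n:ℝ) + 1) ≤ 2 * n := by linarith
      calc Real.logb 2 ((n:ℝ) + 1) ≤ Real.logb 2 (2 * n) :=
            Real.logb_le_logb_of_le one_lt_two hnpos hle
        _ = Real.logb 2 2 + Real.logb 2 (n:ℝ) :=
            Real.logb_mul (by norm_num) (by linarith)
        _ = 1 + Real.logb 2 (n:ℝ) := by rw [Real.logb_self_eq_one (by norm_num)]
    have hepslog : 3 + 2 * E + c ≤ ε * Real.logb 2 (n:ℝ) := by
      rw [div_le_iff₀ hε] at hlogn
      linarith [hlogn]
    have hexp : 2 * Real.logb 2 ((n:ℝ) + 1) + (c * ((n:ℝ) - k n) + 2 * E) ≤ c * (n:ℝ) - 1 := by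
      have := hkc n hn2
      nlinarith [hL, hepslog, this]
    have hpow2 : ((n:ℝ) + 1) ^ 2 = (2:ℝ) ^ (2 * Real.logb 2 ((n:ℝ) + 1)) := by
      rw [show (2:ℝ) ^ (2 * Real.logb 2 ((n:ℝ) + 1))
          = ((2:ℝ) ^ (Real.logb 2 ((n:ℝ) + 1))) ^ (2:ℕ) by
        rw [← Real.rpow_natCast ((2:ℝ) ^ (Real.logb 2 ((n:ℝ) + 1))) 2,
          ← Real.rpow_mul (by norm_num)]
        norm_num
        ring_nf]
      rw [Real.rpow_logb two_pos (by norm_num) hnpos]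
    calc (Bad n : ℝ) ≤ ((n:ℝ) + 1) ^ 2 * 2 ^ (c * ((n:ℝ) - k n) + 2 * E) := hBad_real n
      _ = (2:ℝ) ^ (2 * Real.logb 2 ((n:ℝ) + 1)) * 2 ^ (c * ((n:ℝ) - k n) + 2 * E) := by
          rw [hpow2]
      _ = (2:ℝ) ^ (2 * Real.logb 2 ((n:ℝ) + 1) + (c * ((n:ℝ) - k n) + 2 * E)) :=
          (Real.rpow_add two_pos _ _).symm
      _ ≤ (2:ℝ) ^ (c * (n:ℝ) - 1) :=
          Real.rpow_le_rpow_of_exponent_le (by norm_num) hexp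
  have hGN : ∀ n, G n ≤ N n := fun n => by rw [hsplit n]; omega
  have hGlow : ∀ᶠ n : ℕ in Filter.atTop, (2:ℝ) ^ (c * (n:ℝ) - 1) ≤ (G n : ℝ) := by
    filter_upwards [hev] with n hn
    have h1 : (G n : ℝ) = (N n : ℝ) - Bad n := by
      rw [hsplit n]
      push_cast
      ring
    have h2 := hN_ge n
    have h3 : (2:ℝ) ^ (c * (n:ℝ)) = 2 ^ (c * (n:ℝ) - 1) * 2 := by
      have h4 := Real.rpow_add two_pos (c * (n:ℝ) - 1) 1
      rw [Real.rpow_one, show c * (n:ℝ) - 1 + 1 = c * (n:ℝ) from by ring] at h4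
      exact h4
    linarith
  set F : ℕ → ℝ := fun n => (1 / (n:ℝ)) * Real.logb 2 (G n) with hF
  have hup : ∀ᶠ n : ℕ in Filter.atTop, F n ≤ c + E * (1 / (n:ℝ)) := by
    filter_upwards [Filter.eventually_ge_atTop 1] with n hn1
    have hnpos : (0:ℝ) < (n:ℝ) := by exact_mod_cast hn1
    have hlogG : Real.logb 2 (G n) ≤ c * n + E := by
      rcases Nat.eq_zero_or_pos (G n) with h0 | hpos
      · rw [h0]
        simp only [Nat.cast_zero, Real.logb_zero]
        positivity
      · refine le_trans ?_ (ha_le n)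
        rcases lt_or_eq_of_le (hGN n) with h | h
        · exact le_of_lt (Real.logb_lt_logb one_lt_two (by exact_mod_cast hpos)
            (by exact_mod_cast h))
        · rw [h]
    calc F n ≤ (1 / (n:ℝ)) * (c * n + E) := by
          apply mul_le_mul_of_nonneg_left hlogG (by positivity)
      _ = c + E * (1 / (n:ℝ)) := by field_simp
  have hlow : ∀ᶠ n : ℕ in Filter.atTop, c - 1 * (1 / (n:ℝ)) ≤ F n := by
    filter_upwards [hGlow, Filter.eventually_ge_atTop 1] with n hG2 hn1
    have hnpos : (0:ℝ) < (n:ℝ) := by exact_mod_cast hn1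
    have hGpos : (0:ℝ) < (G n : ℝ) := lt_of_lt_of_le (by positivity) hG2
    have hlogG : c * n - 1 ≤ Real.logb 2 (G n) :=
      (Real.le_logb_iff_rpow_le one_lt_two hGpos).2 hG2
    calc c - 1 * (1 / (n:ℝ)) = (1 / (n:ℝ)) * (c * n - 1) := by field_simp
      _ ≤ F n := mul_le_mul_of_nonneg_left hlogG (by positivity)
  have hFto : Filter.Tendsto F Filter.atTop (nhds c) := by
    have hlim1 : Filter.Tendsto (fun n : ℕ => c - 1 * (1 / (n:ℝ))) Filter.atTop (nhds c) := by
      have := (tendsto_const_nhds (x := c) (f := Filter.atTop (α := ℕ))).sub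
        (tendsto_one_div_atTop_nhds_zero_nat.const_mul 1)
      simpa using this
    have hlim2 : Filter.Tendsto (fun n : ℕ => c + E * (1 / (n:ℝ))) Filter.atTop (nhds c) := by
      have := (tendsto_const_nhds (x := c) (f := Filter.atTop (α := ℕ))).add
        (tendsto_one_div_atTop_nhds_zero_nat.const_mul E)
      simpa using this
    exact tendsto_of_tendsto_of_tendsto_of_le_of_le' hlim1 hlim2 hlow hup
  have hfinal : (fun n : ℕ => (1 / (n : ℝ)) * Real.logb 2
      (Nat.card {w : Fin n → Bool //
        (∃ s : V, (follow step s (List.ofFn w)).isSome) ∧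
        ∀ i j : ℕ, i < j → j + ⌊((2 + ε) * Real.logb lam 2) * Real.logb lam n⌋₊ ≤ n →
          ∃ t < ⌊((2 + ε) * Real.logb lam 2) * Real.logb lam n⌋₊,
            extB n w (i + t) ≠ extB n w (j + t)})) = F := by
    funext n
    rw [hGcard n]
  rw [hfinal, hFto.limsup_eq]
end

section
/- If x ∈ {0,1}^{k'} contains no all-zeros substring of length 2L, and γ(x) is defined by taking the largest index j with x_j x_{j+1} ⋯ x_{k'-1} = 0 1 1 ⋯ 1 and setting γ(x) to be the length-k' prefix of the infinite repetition of x_{[j]} ∘ 1, then γ(x) contains no all-zeros substring of length 2L. -/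
/-- Let `x` be a binary word of length `k'` with no all-zeros substring of length `2L`, and
let `j` be the largest index such that `x_j x_{j+1} ⋯ x_{k'-1} = 0 1 ⋯ 1`. Then the successor
word `γ(x)`, the length-`k'` prefix of the infinite repetition of `x_{[j]} ∘ 1` (i.e.
`γ(x)_t = (x_{[j]} ∘ 1)_{t mod (j+1)}`), also has no all-zeros substring of length `2L`. -/
theorem stmt_18 (k' L j : ℕ) (hL : 1 ≤ L) (x : ℕ → Bool)
    (hj : j < k') (hxj : x j = false) (hsuf : ∀ t, j < t → t < k' → x t = true)
    (hx : ∀ i, i + 2 * L ≤ k' → ∃ t < 2 * L, x (i + t) = true)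
    (g : ℕ → Bool)
    (hg : ∀ t, g t = if t % (j + 1) = j then true else x (t % (j + 1))) :
    ∀ i, i + 2 * L ≤ k' → ∃ t < 2 * L, g (i + t) = true := by
  intro i hi
  set i' := i % (j + 1) with hi'
  have hi'le : i' ≤ j := Nat.lt_succ_iff.mp (Nat.mod_lt _ (Nat.succ_pos j))
  have key : ∀ t, i' + t ≤ j → (i + t) % (j + 1) = i' + t := by
    intro t ht
    rw [Nat.add_mod, Nat.mod_eq_of_lt (show t < j + 1 by omega)]
    exact Nat.mod_eq_of_lt (Nat.lt_succ_of_le ht)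
  by_cases h : j - i' < 2 * L
  · refine ⟨j - i', h, ?_⟩
    rw [hg]
    have : (i + (j - i')) % (j + 1) = j := by
      rw [key _ (by omega)]; omega
    simp [this]
  · push_neg at h
    obtain ⟨t, ht, hxt⟩ := hx i' (by omega)
    refine ⟨t, ht, ?_⟩
    rw [hg]
    have hm : (i + t) % (j + 1) = i' + t := key t (by omega)
    rw [hm]
    split
    · rfl
    · exact hxt
end
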